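/- arXiv:2504.00827 — 9 statements merged into one kernel-verified Lean document; each statement's English description precedes it below -/
import Mathlib

section
/- Let X be a real normed space of dimension at least 1 and t ≥ 1. Then the function τ ↦ J_t[τ,X]^t is convex on [0,∞): for τ₁, τ₂ ≥ 0 and λ ∈ (0,1), J_t[λτ₁+(1−λ)τ₂, X]^t ≤ λ·J_t[τ₁,X]^t + (1−λ)·J_t[τ₂,X]^t. -/
open Real

noncomputable def skewJames (X : Type*) [NormedAddCommGroup X] [NormedSpace ℝ X]
    (t τ : ℝ) : ℝ :=
  sSup {r : ℝ | ∃ x y : X, ‖x‖ = 1 ∧ ‖y‖ = 1 ∧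
    r = ((‖x + τ • y‖ ^ t + ‖τ • x - y‖ ^ t) / 2) ^ (1 / t)}

private lemma rpow_comb {t lam a b : ℝ} (ht : 1 ≤ t) (hl0 : 0 ≤ lam) (hl1 : lam ≤ 1)
    (ha : 0 ≤ a) (hb : 0 ≤ b) :
    (lam * a + (1 - lam) * b) ^ t ≤ lam * a ^ t + (1 - lam) * b ^ t := by
  have hl1' : (0:ℝ) ≤ 1 - lam := by linarith
  have hsum : lam + (1 - lam) = 1 := by ring
  have h := (convexOn_rpow ht).2 (Set.mem_Ici.mpr ha) (Set.mem_Ici.mpr hb) hl0 hl1' hsum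
  simpa [smul_eq_mul] using h

theorem skewJames_pow_convex (X : Type*) [NormedAddCommGroup X] [NormedSpace ℝ X]
    [Nontrivial X] (t : ℝ) (ht : 1 ≤ t) (τ₁ τ₂ lam : ℝ) (hτ₁ : 0 ≤ τ₁) (hτ₂ : 0 ≤ τ₂)
    (hlam₁ : 0 < lam) (hlam₂ : lam < 1) :
    skewJames X t (lam * τ₁ + (1 - lam) * τ₂) ^ t ≤
      lam * skewJames X t τ₁ ^ t + (1 - lam) * skewJames X t τ₂ ^ t := by
  have ht0 : (0:ℝ) < t := lt_of_lt_of_le one_pos ht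
  have htne : t ≠ 0 := ne_of_gt ht0
  set S : ℝ → Set ℝ := fun τ => {r : ℝ | ∃ x y : X, ‖x‖ = 1 ∧ ‖y‖ = 1 ∧
    r = ((‖x + τ • y‖ ^ t + ‖τ • x - y‖ ^ t) / 2) ^ (1 / t)} with hS
  have hJ : ∀ τ, skewJames X t τ = sSup (S τ) := fun τ => rfl
  -- every member is nonnegative
  have hmem_nonneg : ∀ τ, ∀ r ∈ S τ, 0 ≤ r := by
    rintro τ r ⟨x, y, _, _, rfl⟩
    exact Real.rpow_nonneg (by positivity) _
  -- boundedness
  have hbdd : ∀ τ, 0 ≤ τ → BddAbove (S τ) := by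
    rintro τ hτ
    refine ⟨1 + τ, ?_⟩
    rintro r ⟨x, y, hx, hy, rfl⟩
    have ha : ‖x + τ • y‖ ≤ 1 + τ := by
      calc ‖x + τ • y‖ ≤ ‖x‖ + ‖τ • y‖ := norm_add_le _ _
        _ = 1 + τ := by rw [hx, norm_smul, Real.norm_eq_abs, abs_of_nonneg hτ, hy, mul_one]
    have hb : ‖τ • x - y‖ ≤ 1 + τ := by
      calc ‖τ • x - y‖ ≤ ‖τ • x‖ + ‖y‖ := norm_sub_le _ _
        _ = 1 + τ := by
          rw [norm_smul, Real.norm_eq_abs, abs_of_nonneg hτ, hx, hy, mul_one]; ring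
    have h1 : (‖x + τ • y‖ ^ t + ‖τ • x - y‖ ^ t) / 2 ≤ (1 + τ) ^ t := by
      have := Real.rpow_le_rpow (norm_nonneg _) ha ht0.le
      have := Real.rpow_le_rpow (norm_nonneg _) hb ht0.le
      linarith [Real.rpow_le_rpow (norm_nonneg _) ha ht0.le,
        Real.rpow_le_rpow (norm_nonneg _) hb ht0.le]
    calc ((‖x + τ • y‖ ^ t + ‖τ • x - y‖ ^ t) / 2) ^ (1 / t)
        ≤ ((1 + τ) ^ t) ^ (1 / t) := Real.rpow_le_rpow (by positivity) h1 (by positivity)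
      _ = 1 + τ := by
          rw [← Real.rpow_mul (by linarith), mul_one_div, div_self htne, Real.rpow_one]
  -- J nonneg
  have hJnonneg : ∀ τ, 0 ≤ skewJames X t τ := fun τ =>
    Real.sSup_nonneg (hmem_nonneg τ)
  set C : ℝ := lam * skewJames X t τ₁ ^ t + (1 - lam) * skewJames X t τ₂ ^ t with hC
  have hCnonneg : 0 ≤ C := by
    have h1 := Real.rpow_nonneg (hJnonneg τ₁) t
    have h2 := Real.rpow_nonneg (hJnonneg τ₂) t
    nlinarith
  set τm : ℝ := lam * τ₁ + (1 - lam) * τ₂ with hτm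
  -- every member of S τm, raised to t, is ≤ C
  have key : ∀ r ∈ S τm, r ≤ C ^ (1 / t) := by
    rintro r ⟨x, y, hx, hy, rfl⟩
    have hfi : ∀ τ, 0 ≤ τ →
        (‖x + τ • y‖ ^ t + ‖(τ:ℝ) • x - y‖ ^ t) / 2 ≤ skewJames X t τ ^ t := by
      intro τ hτ
      set f : ℝ := (‖x + τ • y‖ ^ t + ‖(τ:ℝ) • x - y‖ ^ t) / 2 with hf
      have hf0 : 0 ≤ f := by positivity
      have hmem : f ^ (1 / t) ∈ S τ := ⟨x, y, hx, hy, rfl⟩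
      have hle : f ^ (1 / t) ≤ skewJames X t τ := le_csSup (hbdd τ hτ) hmem
      have : (f ^ (1 / t)) ^ t ≤ skewJames X t τ ^ t :=
        Real.rpow_le_rpow (Real.rpow_nonneg hf0 _) hle ht0.le
      rwa [← Real.rpow_mul hf0, one_div, inv_mul_cancel₀ htne, Real.rpow_one] at this
    -- convex combination inequalities for the two norms
    have h1 : x + τm • y = lam • (x + τ₁ • y) + (1 - lam) • (x + τ₂ • y) := by
      rw [hτm]; module
    have h2 : τm • x - y = lam • (τ₁ • x - y) + (1 - lam) • (τ₂ • x - y) := by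
      rw [hτm]; module
    have hn1 : ‖x + τm • y‖ ≤ lam * ‖x + τ₁ • y‖ + (1 - lam) * ‖x + τ₂ • y‖ := by
      rw [h1]
      calc ‖lam • (x + τ₁ • y) + (1 - lam) • (x + τ₂ • y)‖
          ≤ ‖lam • (x + τ₁ • y)‖ + ‖(1 - lam) • (x + τ₂ • y)‖ := norm_add_le _ _
        _ = lam * ‖x + τ₁ • y‖ + (1 - lam) * ‖x + τ₂ • y‖ := by
            rw [norm_smul, norm_smul, Real.norm_eq_abs, Real.norm_eq_abs,
              abs_of_nonneg hlam₁.le, abs_of_nonneg (by linarith)]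
    have hn2 : ‖τm • x - y‖ ≤ lam * ‖τ₁ • x - y‖ + (1 - lam) * ‖τ₂ • x - y‖ := by
      rw [h2]
      calc ‖lam • (τ₁ • x - y) + (1 - lam) • (τ₂ • x - y)‖
          ≤ ‖lam • (τ₁ • x - y)‖ + ‖(1 - lam) • (τ₂ • x - y)‖ := norm_add_le _ _
        _ = lam * ‖τ₁ • x - y‖ + (1 - lam) * ‖τ₂ • x - y‖ := by
            rw [norm_smul, norm_smul, Real.norm_eq_abs, Real.norm_eq_abs,
              abs_of_nonneg hlam₁.le, abs_of_nonneg (by linarith)]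
    have hp1 : ‖x + τm • y‖ ^ t ≤ lam * ‖x + τ₁ • y‖ ^ t + (1 - lam) * ‖x + τ₂ • y‖ ^ t :=
      calc ‖x + τm • y‖ ^ t ≤ (lam * ‖x + τ₁ • y‖ + (1 - lam) * ‖x + τ₂ • y‖) ^ t :=
            Real.rpow_le_rpow (norm_nonneg _) hn1 ht0.le
        _ ≤ _ := rpow_comb ht hlam₁.le hlam₂.le (norm_nonneg _) (norm_nonneg _)
    have hp2 : ‖τm • x - y‖ ^ t ≤ lam * ‖τ₁ • x - y‖ ^ t + (1 - lam) * ‖τ₂ • x - y‖ ^ t :=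
      calc ‖τm • x - y‖ ^ t ≤ (lam * ‖τ₁ • x - y‖ + (1 - lam) * ‖τ₂ • x - y‖) ^ t :=
            Real.rpow_le_rpow (norm_nonneg _) hn2 ht0.le
        _ ≤ _ := rpow_comb ht hlam₁.le hlam₂.le (norm_nonneg _) (norm_nonneg _)
    set f : ℝ := (‖x + τm • y‖ ^ t + ‖τm • x - y‖ ^ t) / 2 with hfdef
    have hf0 : 0 ≤ f := by positivity
    have hfC : f ≤ C := by
      have hA := hfi τ₁ hτ₁
      have hB := hfi τ₂ hτ₂
      rw [hC, hfdef]
      nlinarith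
    exact Real.rpow_le_rpow hf0 hfC (by positivity)
  -- conclude
  have hsup : skewJames X t τm ≤ C ^ (1 / t) :=
    Real.sSup_le key (Real.rpow_nonneg hCnonneg _)
  have hfin : (C ^ (1 / t)) ^ t = C := by
    rw [← Real.rpow_mul hCnonneg, one_div, inv_mul_cancel₀ htne, Real.rpow_one]
  have hmain : skewJames X t τm ^ t ≤ (C ^ (1 / t)) ^ t :=
    Real.rpow_le_rpow (hJnonneg τm) hsup ht0.le
  rw [hfin] at hmain
  exact hmain
end

section
/- Let X be a real normed space and t ≥ 1, τ ≥ 0. Then sup over x, y in the closed unit ball of ‖x+τy‖^t + ‖τx−y‖^t equals the sup over x, y in the unit sphere of the same quantity. -/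
/-
For fixed `y`, `x ↦ ‖x + τ • y‖ ^ t + ‖τ • x - y‖ ^ t` is convex (a convex increasing function of
the norm of an affine map), and likewise in `y` for fixed `x`. The closed unit ball is the convex
hull of the unit sphere, so by the maximum principle for convex functions each variable can be
moved to the sphere, one at a time, without decreasing the value.
-/

open Real Metric Set

section

variable {E F : Type*} [NormedAddCommGroup E] [NormedSpace ℝ E]
  [NormedAddCommGroup F] [NormedSpace ℝ F] {t : ℝ}

theorem convexOn_univ_norm_rpow (ht : 1 ≤ t) : ConvexOn ℝ univ (fun x : E ↦ ‖x‖ ^ t) := by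
  refine ⟨convex_univ, fun x _ y _ a b ha hb hab ↦ ?_⟩
  calc ‖a • x + b • y‖ ^ t ≤ (a * ‖x‖ + b * ‖y‖) ^ t := by
        gcongr
        simpa using convexOn_univ_norm.2 (mem_univ x) (mem_univ y) ha hb hab
    _ ≤ a * ‖x‖ ^ t + b * ‖y‖ ^ t := by
        simpa using (convexOn_rpow ht).2 (norm_nonneg x) (norm_nonneg y) ha hb hab

theorem convexOn_univ_norm_linearMap_add_rpow (ht : 1 ≤ t) (L : E →ₗ[ℝ] F) (c : F) :
    ConvexOn ℝ univ (fun x ↦ ‖L x + c‖ ^ t) := by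
  simpa [Function.comp_def] using
    (convexOn_univ_norm_rpow ht).comp_affineMap (L.toAffineMap + AffineMap.const ℝ E c)

variable [Nontrivial E] [Nontrivial F]

theorem ConvexOn.exists_mem_sphere_ge {f : E → ℝ} {r : ℝ} (hf : ConvexOn ℝ (closedBall 0 r) f)
    {x : E} (hx : x ∈ closedBall 0 r) : ∃ y ∈ sphere 0 r, f x ≤ f y := by
  have hr : 0 ≤ r := nonempty_closedBall.1 ⟨x, hx⟩
  rw [← convexHull_sphere_eq_closedBall 0 hr] at hx
  exact hf.exists_ge_of_mem_convexHull sphere_subset_closedBall hx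

theorem exists_mem_sphere_ge_of_separatelyConvexOn {f : E → F → ℝ} {r s : ℝ}
    (hf₁ : ∀ y, ConvexOn ℝ (closedBall 0 r) (f · y)) (hf₂ : ∀ x, ConvexOn ℝ (closedBall 0 s) (f x))
    {x : E} {y : F} (hx : x ∈ closedBall 0 r) (hy : y ∈ closedBall 0 s) :
    ∃ a ∈ sphere 0 r, ∃ b ∈ sphere 0 s, f x y ≤ f a b := by
  obtain ⟨a, ha, hxa⟩ := (hf₁ y).exists_mem_sphere_ge hx
  obtain ⟨b, hb, hyb⟩ := (hf₂ a).exists_mem_sphere_ge hy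
  exact ⟨a, ha, b, hb, hxa.trans hyb⟩

end

theorem sup_ball_eq_sup_sphere_general (X : Type*) [NormedAddCommGroup X] [NormedSpace ℝ X]
    [Nontrivial X] (t τ : ℝ) (ht : 1 ≤ t) :
    sSup {r : ℝ | ∃ x y : X, ‖x‖ ≤ 1 ∧ ‖y‖ ≤ 1 ∧
        r = ‖x + τ • y‖ ^ t + ‖τ • x - y‖ ^ t} =
    sSup {r : ℝ | ∃ x y : X, ‖x‖ = 1 ∧ ‖y‖ = 1 ∧
        r = ‖x + τ • y‖ ^ t + ‖τ • x - y‖ ^ t} := by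
  have convex_left (y : X) : ConvexOn ℝ (closedBall 0 1)
      (fun x ↦ ‖x + τ • y‖ ^ t + ‖τ • x - y‖ ^ t) := by
    refine ((convexOn_univ_norm_linearMap_add_rpow ht LinearMap.id (τ • y)).add
      (convexOn_univ_norm_linearMap_add_rpow ht (τ • LinearMap.id) (-y))).subset
      (subset_univ _) (convex_closedBall 0 1) |>.congr fun x _ ↦ ?_
    simp [sub_eq_add_neg]
  have convex_right (x : X) : ConvexOn ℝ (closedBall 0 1)
      (fun y ↦ ‖x + τ • y‖ ^ t + ‖τ • x - y‖ ^ t) := by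
    refine ((convexOn_univ_norm_linearMap_add_rpow ht (τ • LinearMap.id) x).add
      (convexOn_univ_norm_linearMap_add_rpow ht (-LinearMap.id) (τ • x))).subset
      (subset_univ _) (convex_closedBall 0 1) |>.congr fun y _ ↦ ?_
    simp [add_comm x, neg_add_eq_sub]
  refine csSup_eq_csSup_of_forall_exists_le ?_ ?_
  · rintro r ⟨x, y, hx, hy, rfl⟩
    obtain ⟨a, ha, b, hb, hle⟩ := exists_mem_sphere_ge_of_separatelyConvexOn convex_left
      convex_right (mem_closedBall_zero_iff.2 hx) (mem_closedBall_zero_iff.2 hy)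
    exact ⟨_, ⟨a, b, mem_sphere_zero_iff_norm.1 ha, mem_sphere_zero_iff_norm.1 hb, rfl⟩, hle⟩
  · rintro r ⟨x, y, hx, hy, rfl⟩
    exact ⟨_, ⟨x, y, hx.le, hy.le, rfl⟩, le_rfl⟩

theorem sup_ball_eq_sup_sphere (X : Type*) [NormedAddCommGroup X] [NormedSpace ℝ X]
    [Nontrivial X] (t τ : ℝ) (ht : 1 ≤ t) (hτ : 0 ≤ τ) :
    sSup {r : ℝ | ∃ x y : X, ‖x‖ ≤ 1 ∧ ‖y‖ ≤ 1 ∧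
        r = ‖x + τ • y‖ ^ t + ‖τ • x - y‖ ^ t} =
    sSup {r : ℝ | ∃ x y : X, ‖x‖ = 1 ∧ ‖y‖ = 1 ∧
        r = ‖x + τ • y‖ ^ t + ‖τ • x - y‖ ^ t} :=
  sup_ball_eq_sup_sphere_general X t τ ht
end

section
/- Let X = ℝ² with norm ‖(x₁,x₂)‖ = max{|x₁ + x₂/√3|, |x₁ − x₂/√3|, (2/√3)|x₂|} (the regular hexagonal norm). Then for t ≥ 1: J_t[τ,X] = ((τ+1)^t + τ^t)/2)^(1/t) if τ ≥ 1, and J_t[τ,X] = (((τ+1)^t + 1)/2)^(1/t) if 0 ≤ τ ≤ 1. -/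
open Real

/-!
In the coordinates `p = x₁ + x₂/√3`, `q = x₁ - x₂/√3` the norm is `max |p| |q| |p - q|`, whose
unit ball is a hexagon; there `‖x + y‖ + ‖x - y‖ ≤ 3` on the unit ball. Writing
`x + τy = (1 - τ)x + τ(x + y)` and `τx - y = τ(x - y) - (1 - τ)y` for `τ ≤ 1` (and
`x + τy = (x + y) + (τ - 1)y`, `τx - y = (x - y) + (τ - 1)x` for `τ ≥ 1`) gives
`‖x + τy‖ + ‖τx - y‖ ≤ (τ + 1) + max τ 1`, while each term is at most `τ + 1`. Since `s ↦ s ^ t`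
is convex and increasing, the pair `(τ + 1, max τ 1)` then dominates the power sum, and it is
attained at two adjacent vertices of the hexagon, `(p, q) = (1, 1)` and `(1, 0)`.
-/

theorem ConvexOn.map_add_map_le_of_add_eq {s : Set ℝ} {f : ℝ → ℝ} (hf : ConvexOn ℝ s f)
    {a b c d : ℝ} (hc : c ∈ s) (hd : d ∈ s) (hca : c ≤ a) (had : a ≤ d) (hab : a + b = c + d) :
    f a + f b ≤ f c + f d := by
  rcases hca.eq_or_lt with rfl | hca
  · rw [show b = d by linarith]
  have hcd : 0 < d - c := by linarith
  set l := (a - c) / (d - c)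
  have hl₀ : 0 ≤ l := div_nonneg (by linarith) hcd.le
  have hl₁ : l ≤ 1 := (div_le_one hcd).2 (by linarith)
  have ha : (1 - l) • c + l • d = a := by
    simp only [smul_eq_mul, l]; field_simp; ring
  have hb : l • c + (1 - l) • d = b := by
    simp only [smul_eq_mul, l]; field_simp; linear_combination (c - d) * hab
  have h₁ := hf.2 hc hd (sub_nonneg.2 hl₁) hl₀ (by ring)
  have h₂ := hf.2 hc hd hl₀ (sub_nonneg.2 hl₁) (by ring)
  rw [ha] at h₁
  rw [hb] at h₂
  simp only [smul_eq_mul] at h₁ h₂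
  linarith

theorem Real.rpow_add_rpow_le_rpow_add_rpow {t a b A B : ℝ} (ht : 1 ≤ t) (ha : 0 ≤ a)
    (hb : 0 ≤ b) (hB : 0 ≤ B) (haA : a ≤ A) (hbA : b ≤ A) (hab : a + b ≤ A + B) :
    a ^ t + b ^ t ≤ A ^ t + B ^ t := by
  have ht₀ : 0 ≤ t := by linarith
  rcases le_total (a + b) A with hA | hA
  · calc a ^ t + b ^ t ≤ (a + b) ^ t := add_rpow_le_rpow_add ha hb ht
      _ ≤ A ^ t := by gcongr
      _ ≤ A ^ t + B ^ t := le_add_of_nonneg_right (by positivity)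
  · calc a ^ t + b ^ t ≤ (a + b - A) ^ t + A ^ t :=
          (convexOn_rpow ht).map_add_map_le_of_add_eq (by simp; linarith) (by simp; linarith)
            (by linarith) haA (by ring)
      _ ≤ B ^ t + A ^ t := by gcongr; linarith
      _ = A ^ t + B ^ t := add_comm _ _

section

variable {E : Type*} [SeminormedAddCommGroup E] [NormedSpace ℝ E] {x y : E} {C τ : ℝ}

theorem norm_add_smul_add_norm_smul_sub_le (hx : ‖x‖ ≤ 1) (hy : ‖y‖ ≤ 1)
    (hxy : ‖x + y‖ + ‖x - y‖ ≤ C) (hτ : 0 ≤ τ) :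
    ‖x + τ • y‖ + ‖τ • x - y‖ ≤ 2 * max τ 1 + (C - 2) * min τ 1 := by
  rcases le_total τ 1 with hτ₁ | hτ₁
  · have hx' : x + τ • y = (1 - τ) • x + τ • (x + y) := by module
    have hy' : τ • x - y = τ • (x - y) - (1 - τ) • y := by module
    calc ‖x + τ • y‖ + ‖τ • x - y‖
        ≤ (1 - τ) * ‖x‖ + τ * ‖x + y‖ + (τ * ‖x - y‖ + (1 - τ) * ‖y‖) := by
          rw [hx', hy']
          gcongr
          · exact (norm_add_le _ _).trans_eq (by
              rw [norm_smul, norm_smul, norm_of_nonneg (sub_nonneg.2 hτ₁), norm_of_nonneg hτ])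
          · exact (norm_sub_le _ _).trans_eq (by
              rw [norm_smul, norm_smul, norm_of_nonneg (sub_nonneg.2 hτ₁), norm_of_nonneg hτ])
      _ ≤ 2 * max τ 1 + (C - 2) * min τ 1 := by
          rw [max_eq_right hτ₁, min_eq_left hτ₁]
          nlinarith
  · have hx' : x + τ • y = (x + y) + (τ - 1) • y := by module
    have hy' : τ • x - y = (x - y) + (τ - 1) • x := by module
    calc ‖x + τ • y‖ + ‖τ • x - y‖
        ≤ ‖x + y‖ + (τ - 1) * ‖y‖ + (‖x - y‖ + (τ - 1) * ‖x‖) := by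
          rw [hx', hy']
          gcongr
          · exact (norm_add_le _ _).trans_eq (by rw [norm_smul, norm_of_nonneg (sub_nonneg.2 hτ₁)])
          · exact (norm_add_le _ _).trans_eq (by rw [norm_smul, norm_of_nonneg (sub_nonneg.2 hτ₁)])
      _ ≤ 2 * max τ 1 + (C - 2) * min τ 1 := by
          rw [max_eq_left hτ₁, min_eq_right hτ₁]
          nlinarith

end

def hexNorm (z : ℝ × ℝ) : ℝ := max (max |z.1| |z.2|) |z.1 - z.2|

theorem hexNorm_mk (p q : ℝ) : hexNorm (p, q) = max (max |p| |q|) |p - q| := rfl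

theorem hexNorm_add_add_hexNorm_sub_le {z w : ℝ × ℝ} (hz : hexNorm z ≤ 1) (hw : hexNorm w ≤ 1) :
    hexNorm (z + w) + hexNorm (z - w) ≤ 3 := by
  -- In each of the 36 resulting linear cases one half telescopes, e.g. `z.1 + w.1 - (z.2 - w.2)`
  -- is `(z.1 - z.2) + w.1 + w.2`, so the sum is at most `1 + 1 + 1`.
  simp only [hexNorm, Prod.fst_add, Prod.snd_add, Prod.fst_sub, Prod.snd_sub, abs_eq_max_neg,
    max_add, add_max, max_le_iff] at hz hw ⊢
  obtain ⟨⟨⟨_, _⟩, _, _⟩, _, _⟩ := hz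
  obtain ⟨⟨⟨_, _⟩, _, _⟩, _, _⟩ := hw
  repeat' constructor
  all_goals linarith

noncomputable def hexCoords : (ℝ × ℝ) ≃ₗ[ℝ] ℝ × ℝ where
  toFun u := (u.1 + u.2 / √3, u.1 - u.2 / √3)
  invFun z := ((z.1 + z.2) / 2, √3 * (z.1 - z.2) / 2)
  map_add' u v := by ext <;> simp only [Prod.fst_add, Prod.snd_add] <;> ring
  map_smul' c u := by
    ext <;> simp only [Prod.smul_fst, Prod.smul_snd, smul_eq_mul, RingHom.id_apply] <;> ring
  left_inv u := by ext <;> field_simp <;> ring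
  right_inv z := by ext <;> field_simp <;> ring

theorem skewJames_eq_of_norm_eq_hexNorm {X : Type*} [NormedAddCommGroup X] [NormedSpace ℝ X]
    (L : X ≃ₗ[ℝ] ℝ × ℝ) (hL : ∀ x, ‖x‖ = hexNorm (L x)) {t τ : ℝ} (ht : 1 ≤ t) (hτ : 0 ≤ τ) :
    skewJames X t τ = (((τ + 1) ^ t + max τ 1 ^ t) / 2) ^ (1 / t) := by
  refine IsGreatest.csSup_eq ⟨⟨L.symm (1, 1), L.symm (1, 0), ?_, ?_, ?_⟩, ?_⟩
  · simp [hL, hexNorm_mk]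
  · simp [hL, hexNorm_mk]
  · have hx : ‖L.symm (1, 1) + τ • L.symm (1, 0)‖ = τ + 1 := by
      simp only [hL, map_add, map_smul, L.apply_symm_apply, Prod.smul_mk, smul_eq_mul, mul_one,
        mul_zero, Prod.mk_add_mk, add_zero, hexNorm_mk, add_sub_cancel_left, abs_one]
      rw [abs_of_nonneg (by linarith : 0 ≤ 1 + τ), abs_of_nonneg hτ, max_assoc,
        max_eq_left (max_le (by linarith) (by linarith)), add_comm]
    have hy : ‖τ • L.symm (1, 1) - L.symm (1, 0)‖ = max τ 1 := by
      simp only [hL, map_sub, map_smul, L.apply_symm_apply, Prod.smul_mk, smul_eq_mul, mul_one,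
        Prod.mk_sub_mk, sub_zero, hexNorm_mk, sub_sub_cancel_left, abs_neg, abs_one]
      rw [abs_of_nonneg hτ, max_assoc, max_eq_right]
      exact abs_sub_le_iff.2 ⟨by linarith [le_max_left τ 1], by linarith [le_max_right τ 1]⟩
    rw [hx, hy]
  · rintro r ⟨x, y, hx, hy, rfl⟩
    have hxy : ‖x + y‖ + ‖x - y‖ ≤ 3 := by
      rw [hL, hL, map_add, map_sub]
      exact hexNorm_add_add_hexNorm_sub_le (hL x ▸ hx.le) (hL y ▸ hy.le)
    have hsum := norm_add_smul_add_norm_smul_sub_le hx.le hy.le hxy hτ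
    refine rpow_le_rpow (by positivity) (div_le_div_of_nonneg_right ?_ two_pos.le) (by positivity)
    refine rpow_add_rpow_le_rpow_add_rpow ht (norm_nonneg _) (norm_nonneg _) (by positivity)
      ((norm_add_le _ _).trans_eq (by rw [norm_smul, hx, hy, norm_of_nonneg hτ]; ring))
      ((norm_sub_le _ _).trans_eq (by rw [norm_smul, hx, hy, norm_of_nonneg hτ, mul_one]))
      (by linarith [min_add_max τ 1])

theorem skewJames_hexagonal (X : Type*) [NormedAddCommGroup X] [NormedSpace ℝ X]
    (e : X ≃ₗ[ℝ] ℝ × ℝ)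
    (hnorm : ∀ x : X, ‖x‖ =
      max (max |(e x).1 + (e x).2 / Real.sqrt 3| |(e x).1 - (e x).2 / Real.sqrt 3|)
        (2 / Real.sqrt 3 * |(e x).2|))
    (t τ : ℝ) (ht : 1 ≤ t) (hτ : 0 ≤ τ) :
    (1 ≤ τ → skewJames X t τ = (((τ + 1) ^ t + τ ^ t) / 2) ^ (1 / t)) ∧
    (τ ≤ 1 → skewJames X t τ = (((τ + 1) ^ t + 1) / 2) ^ (1 / t)) := by
  have hL : ∀ x, ‖x‖ = hexNorm (e.trans hexCoords x) := fun x => by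
    have h : 2 / √3 * |(e x).2| = |(e x).1 + (e x).2 / √3 - ((e x).1 - (e x).2 / √3)| := by
      rw [show (e x).1 + (e x).2 / √3 - ((e x).1 - (e x).2 / √3) = 2 / √3 * (e x).2 by ring,
        abs_mul, abs_of_pos (by positivity : (0 : ℝ) < 2 / √3)]
    rw [hnorm, h]
    rfl
  have key := skewJames_eq_of_norm_eq_hexNorm (e.trans hexCoords) hL ht hτ
  exact ⟨fun h => by rw [key, max_eq_left h], fun h => by rw [key, max_eq_right h, one_rpow]⟩
end

section
/- Let X be a real normed space of dimension ≥ 2, let t₂ ≥ t₁ ≥ 1 and 0 ≤ τ ≤ 1. Then J_{t₁}[τ,X]^{t₂} ≤ J_{t₂}[τ,X]^{t₂} ≤ ((1+τ)^{t₂} + (2·J_{t₁}[τ,X]^{t₁} − (1+τ)^{t₁})^{t₂/t₁})/2. -/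
open Real

section Helpers

lemma rearr_aux {p : ℝ} (hp : 1 ≤ p) {a b d : ℝ} (ha : 0 ≤ a) (hab : a ≤ b) (hd : 0 ≤ d) :
    (a + d) ^ p + b ^ p ≤ a ^ p + (b + d) ^ p := by
  rcases eq_or_lt_of_le (show a ≤ b + d by linarith) with h | h
  · have hba : b = a := le_antisymm (by linarith) hab
    have hd0 : d = 0 := by linarith
    simp [hba, hd0]
  · have hden : 0 < b + d - a := by linarith
    set lam : ℝ := (b - a) / (b + d - a) with hlam
    have hl0 : 0 ≤ lam := div_nonneg (by linarith) hden.le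
    have hl1 : 0 ≤ 1 - lam := by
      have : lam ≤ 1 := by rw [hlam, div_le_one hden]; linarith
      linarith
    have hc := convexOn_rpow hp
    have hbd : (0:ℝ) ≤ b + d := by linarith
    have h1 := hc.2 (Set.mem_Ici.mpr ha) (Set.mem_Ici.mpr hbd) hl0 hl1 (by ring)
    have h2 := hc.2 (Set.mem_Ici.mpr ha) (Set.mem_Ici.mpr hbd) hl1 hl0 (by ring)
    simp only [smul_eq_mul] at h1 h2
    have e1 : lam * a + (1 - lam) * (b + d) = a + d := by
      rw [hlam]; field_simp; ring
    have e2 : (1 - lam) * a + lam * (b + d) = b := by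
      rw [hlam]; field_simp; ring
    rw [e1] at h1
    rw [e2] at h2
    linarith

lemma key_rearr {p u v C s : ℝ} (hp : 1 ≤ p) (hu0 : 0 ≤ u) (hv0 : 0 ≤ v)
    (huC : u ≤ C) (hvC : v ≤ C) (huv : u + v ≤ s) (hCs : C ≤ s) :
    u ^ p + v ^ p ≤ C ^ p + (s - C) ^ p := by
  have hp0 : p ≠ 0 := by positivity
  have hsC : (0:ℝ) ≤ (s - C) ^ p := rpow_nonneg (by linarith) p
  rcases le_or_gt (u + v) C with h | h
  · have h0 := rearr_aux hp (le_refl (0:ℝ)) hu0 hv0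
    rw [zero_add, zero_rpow hp0, zero_add] at h0
    have : (u + v) ^ p ≤ C ^ p := rpow_le_rpow (by linarith) h (by positivity)
    linarith
  · have h0 := rearr_aux hp (show (0:ℝ) ≤ u + v - C by linarith)
      (show u + v - C ≤ u by linarith) (show (0:ℝ) ≤ C - u by linarith)
    have e1 : u + v - C + (C - u) = v := by ring
    have e2 : u + (C - u) = C := by ring
    rw [e1, e2] at h0
    have : (u + v - C) ^ p ≤ (s - C) ^ p := rpow_le_rpow (by linarith) (by linarith) (by positivity)
    linarith

lemma pm_aux {p u v : ℝ} (hp : 1 ≤ p) (hu : 0 ≤ u) (hv : 0 ≤ v) :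
    ((u + v) / 2) ^ p ≤ (u ^ p + v ^ p) / 2 := by
  have hc := (convexOn_rpow hp).2 (Set.mem_Ici.mpr hu) (Set.mem_Ici.mpr hv)
    (by norm_num : (0:ℝ) ≤ 1/2) (by norm_num : (0:ℝ) ≤ 1/2) (by norm_num)
  simp only [smul_eq_mul] at hc
  calc ((u + v) / 2) ^ p = (1/2 * u + 1/2 * v) ^ p := by ring_nf
    _ ≤ 1/2 * u ^ p + 1/2 * v ^ p := hc
    _ = (u ^ p + v ^ p) / 2 := by ring

lemma rpow_one_div_rpow {x t : ℝ} (hx : 0 ≤ x) (ht : t ≠ 0) : (x ^ (1/t)) ^ t = x := by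
  rw [← Real.rpow_mul hx, one_div_mul_cancel ht, Real.rpow_one]

end Helpers

theorem skewJames_pow_comparison (X : Type*) [NormedAddCommGroup X] [NormedSpace ℝ X]
    (hdim : 2 ≤ Module.rank ℝ X) (t₁ t₂ τ : ℝ) (ht₁ : 1 ≤ t₁) (ht : t₁ ≤ t₂)
    (hτ₀ : 0 ≤ τ) (hτ₁ : τ ≤ 1) :
    skewJames X t₁ τ ^ t₂ ≤ skewJames X t₂ τ ^ t₂ ∧
    skewJames X t₂ τ ^ t₂ ≤
      ((1 + τ) ^ t₂ + (2 * skewJames X t₁ τ ^ t₁ - (1 + τ) ^ t₁) ^ (t₂ / t₁)) / 2 := by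
  have ht₂ : 1 ≤ t₂ := ht₁.trans ht
  have ht₁0 : 0 < t₁ := lt_of_lt_of_le one_pos ht₁
  have ht₂0 : 0 < t₂ := lt_of_lt_of_le one_pos ht₂
  have hτ1 : (0:ℝ) ≤ 1 + τ := by linarith
  have hp1 : 1 ≤ t₂ / t₁ := (one_le_div ht₁0).mpr ht
  have hnt : Nontrivial X := by
    have h0 : 0 < Module.rank ℝ X := lt_of_lt_of_le (by norm_num) hdim
    exact rank_pos_iff_nontrivial.mp h0
  obtain ⟨e, he⟩ := exists_norm_eq X (zero_le_one (α := ℝ))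
  -- the defining sets
  set S : ℝ → Set ℝ := fun t => {r : ℝ | ∃ x y : X, ‖x‖ = 1 ∧ ‖y‖ = 1 ∧
    r = ((‖x + τ • y‖ ^ t + ‖τ • x - y‖ ^ t) / 2) ^ (1 / t)} with hSdef
  have hJ : ∀ t, skewJames X t τ = sSup (S t) := fun t => rfl
  -- the witness x = y = e
  have hwit : ∀ t : ℝ, (((1+τ)^t + (1-τ)^t)/2) ^ (1/t) ∈ S t := by
    intro t
    refine ⟨e, e, he, he, ?_⟩
    have h1 : e + τ • e = (1+τ) • e := by rw [add_smul, one_smul]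
    have h2 : τ • e - e = (τ-1) • e := by rw [sub_smul, one_smul]
    rw [h1, h2, norm_smul, norm_smul, he, Real.norm_eq_abs, Real.norm_eq_abs,
      abs_of_nonneg hτ1, abs_of_nonpos (by linarith : τ - 1 ≤ 0), mul_one, mul_one]
    norm_num
  have hwit_nonneg : ∀ t : ℝ, 0 ≤ (((1+τ)^t + (1-τ)^t)/2) ^ (1/t) := by
    intro t
    have h1 : (0:ℝ) ≤ (1+τ)^t := rpow_nonneg hτ1 _
    have h2 : (0:ℝ) ≤ (1-τ)^t := rpow_nonneg (by linarith) _
    exact rpow_nonneg (by linarith) _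
  -- norm bounds
  have hnormb : ∀ x y : X, ‖x‖ = 1 → ‖y‖ = 1 →
      ‖x + τ • y‖ ≤ 1 + τ ∧ ‖τ • x - y‖ ≤ 1 + τ := by
    intro x y hx hy
    constructor
    · calc ‖x + τ • y‖ ≤ ‖x‖ + ‖τ • y‖ := norm_add_le _ _
        _ = 1 + τ := by
          rw [hx, norm_smul, Real.norm_eq_abs, abs_of_nonneg hτ₀, hy, mul_one]
    · calc ‖τ • x - y‖ ≤ ‖τ • x‖ + ‖y‖ := norm_sub_le _ _
        _ = τ + 1 := by
          rw [hy, norm_smul, Real.norm_eq_abs, abs_of_nonneg hτ₀, hx, mul_one]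
        _ ≤ 1 + τ := by linarith
  -- boundedness
  have hbdd : ∀ t : ℝ, 1 ≤ t → BddAbove (S t) := by
    intro t htt
    refine ⟨1 + τ, ?_⟩
    rintro r ⟨x, y, hx, hy, rfl⟩
    obtain ⟨ha, hb⟩ := hnormb x y hx hy
    have ht0 : 0 < t := lt_of_lt_of_le one_pos htt
    have h1 : ‖x + τ • y‖ ^ t ≤ (1+τ)^t := rpow_le_rpow (norm_nonneg _) ha ht0.le
    have h2 : ‖τ • x - y‖ ^ t ≤ (1+τ)^t := rpow_le_rpow (norm_nonneg _) hb ht0.le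
    have hmid : (‖x + τ • y‖ ^ t + ‖τ • x - y‖ ^ t) / 2 ≤ (1+τ)^t := by linarith
    have hmid0 : 0 ≤ (‖x + τ • y‖ ^ t + ‖τ • x - y‖ ^ t) / 2 := by
      have := rpow_nonneg (norm_nonneg (x + τ • y)) t
      have := rpow_nonneg (norm_nonneg (τ • x - y)) t
      linarith
    calc ((‖x + τ • y‖ ^ t + ‖τ • x - y‖ ^ t) / 2) ^ (1/t)
        ≤ ((1+τ)^t) ^ (1/t) := rpow_le_rpow hmid0 hmid (by positivity)
      _ = 1 + τ := by
          rw [← Real.rpow_mul hτ1, mul_one_div, div_self ht0.ne', Real.rpow_one]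
  -- nonnegativity of skewJames
  have hJnn : ∀ t : ℝ, 1 ≤ t → 0 ≤ skewJames X t τ := by
    intro t htt
    exact le_trans (hwit_nonneg t) (le_csSup (hbdd t htt) (hwit t))
  -- A-value bound
  have hA_le : ∀ x y : X, ‖x‖ = 1 → ‖y‖ = 1 →
      (‖x + τ • y‖ ^ t₁ + ‖τ • x - y‖ ^ t₁) / 2 ≤ skewJames X t₁ τ ^ t₁ := by
    intro x y hx hy
    have hmem : ((‖x + τ • y‖ ^ t₁ + ‖τ • x - y‖ ^ t₁) / 2) ^ (1/t₁) ∈ S t₁ :=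
      ⟨x, y, hx, hy, rfl⟩
    have hle := le_csSup (hbdd t₁ ht₁) hmem
    have hAnn : 0 ≤ (‖x + τ • y‖ ^ t₁ + ‖τ • x - y‖ ^ t₁) / 2 := by
      have := rpow_nonneg (norm_nonneg (x + τ • y)) t₁
      have := rpow_nonneg (norm_nonneg (τ • x - y)) t₁
      linarith
    calc (‖x + τ • y‖ ^ t₁ + ‖τ • x - y‖ ^ t₁) / 2
        = (((‖x + τ • y‖ ^ t₁ + ‖τ • x - y‖ ^ t₁) / 2) ^ (1/t₁)) ^ t₁ :=
          (rpow_one_div_rpow hAnn ht₁0.ne').symm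
      _ ≤ skewJames X t₁ τ ^ t₁ := rpow_le_rpow (rpow_nonneg hAnn _) hle ht₁0.le
  -- witness bound for t₁
  have hws : ((1+τ)^t₁ + (1-τ)^t₁)/2 ≤ skewJames X t₁ τ ^ t₁ := by
    have hle := le_csSup (hbdd t₁ ht₁) (hwit t₁)
    have hAnn : 0 ≤ ((1+τ)^t₁ + (1-τ)^t₁)/2 := by
      have h1 : (0:ℝ) ≤ (1+τ)^t₁ := rpow_nonneg hτ1 _
      have h2 : (0:ℝ) ≤ (1-τ)^t₁ := rpow_nonneg (by linarith) _
      linarith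
    calc ((1+τ)^t₁ + (1-τ)^t₁)/2
        = ((((1+τ)^t₁ + (1-τ)^t₁)/2) ^ (1/t₁)) ^ t₁ :=
          (rpow_one_div_rpow hAnn ht₁0.ne').symm
      _ ≤ skewJames X t₁ τ ^ t₁ := rpow_le_rpow (rpow_nonneg hAnn _) hle ht₁0.le
  have hCs : (1+τ)^t₁ ≤ 2 * skewJames X t₁ τ ^ t₁ := by
    have h2 : (0:ℝ) ≤ (1-τ)^t₁ := rpow_nonneg (by linarith) _
    linarith
  -- rpow composition identities
  have epow : ∀ a : ℝ, 0 ≤ a → (a ^ t₁) ^ (t₂/t₁) = a ^ t₂ := by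
    intro a ha
    rw [← Real.rpow_mul ha]
    congr 1
    field_simp
  constructor
  · -- first inequality
    have hle12 : skewJames X t₁ τ ≤ skewJames X t₂ τ := by
      rw [hJ t₁]
      apply csSup_le ⟨_, hwit t₁⟩
      rintro r ⟨x, y, hx, hy, rfl⟩
      have ha0 : (0:ℝ) ≤ ‖x + τ • y‖ := norm_nonneg _
      have hb0 : (0:ℝ) ≤ ‖τ • x - y‖ := norm_nonneg _
      have hmem2 : ((‖x + τ • y‖ ^ t₂ + ‖τ • x - y‖ ^ t₂) / 2) ^ (1/t₂) ∈ S t₂ :=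
        ⟨x, y, hx, hy, rfl⟩
      refine le_trans ?_ (le_csSup (hbdd t₂ ht₂) hmem2)
      have hAnn : 0 ≤ (‖x + τ • y‖ ^ t₁ + ‖τ • x - y‖ ^ t₁) / 2 := by
        have := rpow_nonneg ha0 t₁; have := rpow_nonneg hb0 t₁; linarith
      have hBnn : 0 ≤ (‖x + τ • y‖ ^ t₂ + ‖τ • x - y‖ ^ t₂) / 2 := by
        have := rpow_nonneg ha0 t₂; have := rpow_nonneg hb0 t₂; linarith
      rw [← Real.rpow_le_rpow_iff (rpow_nonneg hAnn _) (rpow_nonneg hBnn _) ht₂0,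
        rpow_one_div_rpow hBnn ht₂0.ne', ← Real.rpow_mul hAnn]
      have hexp : 1 / t₁ * t₂ = t₂ / t₁ := by ring
      rw [hexp]
      have hkey := pm_aux hp1 (rpow_nonneg ha0 t₁) (rpow_nonneg hb0 t₁)
      rw [epow _ ha0, epow _ hb0] at hkey
      exact hkey
    exact rpow_le_rpow (hJnn t₁ ht₁) hle12 ht₂0.le
  · -- second inequality
    set K : ℝ := ((1 + τ) ^ t₂ + (2 * skewJames X t₁ τ ^ t₁ - (1 + τ) ^ t₁) ^ (t₂ / t₁)) / 2
      with hK
    have hsC0 : 0 ≤ 2 * skewJames X t₁ τ ^ t₁ - (1 + τ) ^ t₁ := by linarith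
    have hK0 : 0 ≤ K := by
      have h1 : (0:ℝ) ≤ (1+τ)^t₂ := rpow_nonneg hτ1 _
      have h2 : (0:ℝ) ≤ (2 * skewJames X t₁ τ ^ t₁ - (1 + τ) ^ t₁) ^ (t₂ / t₁) :=
        rpow_nonneg hsC0 _
      rw [hK]; linarith
    have hb2 : skewJames X t₂ τ ≤ K ^ (1/t₂) := by
      rw [hJ t₂]
      apply csSup_le ⟨_, hwit t₂⟩
      rintro r ⟨x, y, hx, hy, rfl⟩
      have ha0 : (0:ℝ) ≤ ‖x + τ • y‖ := norm_nonneg _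
      have hb0 : (0:ℝ) ≤ ‖τ • x - y‖ := norm_nonneg _
      obtain ⟨ha, hb⟩ := hnormb x y hx hy
      have hBnn : 0 ≤ (‖x + τ • y‖ ^ t₂ + ‖τ • x - y‖ ^ t₂) / 2 := by
        have := rpow_nonneg ha0 t₂; have := rpow_nonneg hb0 t₂; linarith
      apply rpow_le_rpow hBnn ?_ (by positivity)
      -- B ≤ K
      have hkey := key_rearr hp1 (rpow_nonneg ha0 t₁) (rpow_nonneg hb0 t₁)
        (rpow_le_rpow ha0 ha ht₁0.le) (rpow_le_rpow hb0 hb ht₁0.le)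
        (by linarith [hA_le x y hx hy]) hCs
      rw [epow _ ha0, epow _ hb0, epow _ hτ1] at hkey
      rw [hK]
      linarith
    calc skewJames X t₂ τ ^ t₂ ≤ (K ^ (1/t₂)) ^ t₂ :=
          rpow_le_rpow (hJnn t₂ ht₂) hb2 ht₂0.le
      _ = K := rpow_one_div_rpow hK0 ht₂0.ne'
end

section
/- Let X be a real normed space of dimension ≥ 2, t₂ ≥ t₁ ≥ 1, and 0 ≤ τ ≤ 1. Then J_{t₁}[τ,X] = 1+τ if and only if J_{t₂}[τ,X] = 1+τ. -/
open Real

lemma skewJames_set_le {X : Type*} [NormedAddCommGroup X] [NormedSpace ℝ X]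
    {t τ r : ℝ} (ht : 0 < t) (hτ : 0 ≤ τ)
    (hr : r ∈ {r : ℝ | ∃ x y : X, ‖x‖ = 1 ∧ ‖y‖ = 1 ∧
      r = ((‖x + τ • y‖ ^ t + ‖τ • x - y‖ ^ t) / 2) ^ (1 / t)}) :
    r ≤ 1 + τ := by
  obtain ⟨x, y, hx, hy, rfl⟩ := hr
  have ha : ‖x + τ • y‖ ≤ 1 + τ := by
    calc ‖x + τ • y‖ ≤ ‖x‖ + ‖τ • y‖ := norm_add_le _ _
    _ = 1 + τ := by rw [hx, norm_smul, hy]; simp [abs_of_nonneg hτ]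
  have hb : ‖τ • x - y‖ ≤ 1 + τ := by
    calc ‖τ • x - y‖ ≤ ‖τ • x‖ + ‖y‖ := norm_sub_le _ _
    _ = 1 + τ := by rw [hy, norm_smul, hx]; simp [abs_of_nonneg hτ]; ring
  have h1 : ‖x + τ • y‖ ^ t ≤ (1 + τ) ^ t :=
    Real.rpow_le_rpow (norm_nonneg _) ha ht.le
  have h2 : ‖τ • x - y‖ ^ t ≤ (1 + τ) ^ t :=
    Real.rpow_le_rpow (norm_nonneg _) hb ht.le
  have hmid : (‖x + τ • y‖ ^ t + ‖τ • x - y‖ ^ t) / 2 ≤ (1 + τ) ^ t := by linarith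
  calc ((‖x + τ • y‖ ^ t + ‖τ • x - y‖ ^ t) / 2) ^ (1 / t)
      ≤ ((1 + τ) ^ t) ^ (1 / t) := by
        apply Real.rpow_le_rpow _ hmid (by positivity)
        have := Real.rpow_nonneg (norm_nonneg (x + τ • y)) t
        have := Real.rpow_nonneg (norm_nonneg (τ • x - y)) t
        linarith
    _ = 1 + τ := by
        rw [← Real.rpow_mul (by linarith), mul_one_div, div_self ht.ne', Real.rpow_one]

lemma min_le_mean_rpow {a b u : ℝ} (ha : 0 ≤ a) (hb : 0 ≤ b) (hu : 0 < u) :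
    min a b ≤ ((a ^ u + b ^ u) / 2) ^ (1 / u) := by
  have hm : 0 ≤ min a b := le_min ha hb
  have h1 : min a b ^ u ≤ a ^ u := Real.rpow_le_rpow hm (min_le_left _ _) hu.le
  have h2 : min a b ^ u ≤ b ^ u := Real.rpow_le_rpow hm (min_le_right _ _) hu.le
  have h3 : min a b ^ u ≤ (a ^ u + b ^ u) / 2 := by linarith
  calc min a b = (min a b ^ u) ^ (1 / u) := by
        rw [← Real.rpow_mul hm, mul_one_div, div_self hu.ne', Real.rpow_one]
    _ ≤ ((a ^ u + b ^ u) / 2) ^ (1 / u) :=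
        Real.rpow_le_rpow (Real.rpow_nonneg hm u) h3 (by positivity)

lemma skewJames_transfer (X : Type*) [NormedAddCommGroup X] [NormedSpace ℝ X]
    (hdim : 2 ≤ Module.rank ℝ X) (s u τ : ℝ) (hs : 0 < s) (hu : 0 < u)
    (hτ : 0 ≤ τ) (h : skewJames X s τ = 1 + τ) : skewJames X u τ = 1 + τ := by
  set c : ℝ := 1 + τ with hc
  have hc0 : 0 < c := by positivity
  -- a unit vector
  have hnt : Nontrivial X := by
    rw [← rank_pos_iff_nontrivial (R := ℝ)]
    exact lt_of_lt_of_le (by norm_num) hdim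
  obtain ⟨z, hz⟩ := exists_ne (0 : X)
  have hz1 : ‖‖z‖⁻¹ • z‖ = 1 := norm_smul_inv_norm hz
  set e : X := ‖z‖⁻¹ • z
  have hne : ∀ t : ℝ, ({r : ℝ | ∃ x y : X, ‖x‖ = 1 ∧ ‖y‖ = 1 ∧
      r = ((‖x + τ • y‖ ^ t + ‖τ • x - y‖ ^ t) / 2) ^ (1 / t)}).Nonempty := by
    intro t
    exact ⟨_, e, e, hz1, hz1, rfl⟩
  have hbdd : ∀ t : ℝ, 0 < t → BddAbove {r : ℝ | ∃ x y : X, ‖x‖ = 1 ∧ ‖y‖ = 1 ∧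
      r = ((‖x + τ • y‖ ^ t + ‖τ • x - y‖ ^ t) / 2) ^ (1 / t)} := by
    intro t ht
    exact ⟨c, fun r hr => skewJames_set_le ht hτ hr⟩
  have hJle : skewJames X u τ ≤ c :=
    csSup_le (hne u) (fun r hr => skewJames_set_le hu hτ hr)
  refine le_antisymm hJle ?_
  by_contra hcon
  push_neg at hcon
  set J : ℝ := skewJames X u τ with hJdef
  have hJ0 : 0 ≤ J := by
    refine le_csSup_of_le (hbdd u hu) ⟨e, e, hz1, hz1, rfl⟩ ?_
    positivity
  have hJc : J < c := hcon
  -- the threshold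
  set K : ℝ := ((J ^ s + c ^ s) / 2) ^ (1 / s) with hK
  have hKc : K < c := by
    have h1 : J ^ s < c ^ s := Real.rpow_lt_rpow hJ0 hJc hs
    have h2 : (J ^ s + c ^ s) / 2 < c ^ s := by linarith
    calc K ≤ ((J ^ s + c ^ s) / 2) ^ (1 / s) := le_refl _
      _ < (c ^ s) ^ (1 / s) := by
          apply Real.rpow_lt_rpow _ h2 (by positivity)
          have := Real.rpow_nonneg hJ0 s
          have := Real.rpow_nonneg hc0.le s
          linarith
      _ = c := by
          rw [← Real.rpow_mul hc0.le, mul_one_div, div_self hs.ne', Real.rpow_one]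
  have hKlt : K < sSup {r : ℝ | ∃ x y : X, ‖x‖ = 1 ∧ ‖y‖ = 1 ∧
      r = ((‖x + τ • y‖ ^ s + ‖τ • x - y‖ ^ s) / 2) ^ (1 / s)} := by
    rw [show sSup _ = skewJames X s τ from rfl, h]; exact hKc
  obtain ⟨r, hrS, hKr⟩ := exists_lt_of_lt_csSup (hne s) hKlt
  obtain ⟨x, y, hx, hy, rfl⟩ := hrS
  set a : ℝ := ‖x + τ • y‖ with hadef
  set b : ℝ := ‖τ • x - y‖ with hbdef
  have ha0 : 0 ≤ a := norm_nonneg _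
  have hb0 : 0 ≤ b := norm_nonneg _
  have hac : a ≤ c := by
    calc a ≤ ‖x‖ + ‖τ • y‖ := norm_add_le _ _
    _ = c := by rw [hx, norm_smul, hy]; simp [hc, abs_of_nonneg hτ]
  have hbc : b ≤ c := by
    calc b ≤ ‖τ • x‖ + ‖y‖ := norm_sub_le _ _
    _ = c := by rw [hy, norm_smul, hx]; simp [hc, abs_of_nonneg hτ]; ring
  -- both a and b exceed J
  have hmin : J < min a b := by
    by_contra hmin
    push_neg at hmin
    have hcases : a ≤ J ∨ b ≤ J := min_le_iff.mp hmin
    have hsum : (a ^ s + b ^ s) / 2 ≤ (J ^ s + c ^ s) / 2 := by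
      rcases hcases with h' | h'
      · have h1 : a ^ s ≤ J ^ s := Real.rpow_le_rpow ha0 h' hs.le
        have h2 : b ^ s ≤ c ^ s := Real.rpow_le_rpow hb0 hbc hs.le
        linarith
      · have h1 : b ^ s ≤ J ^ s := Real.rpow_le_rpow hb0 h' hs.le
        have h2 : a ^ s ≤ c ^ s := Real.rpow_le_rpow ha0 hac hs.le
        linarith
    have : ((a ^ s + b ^ s) / 2) ^ (1 / s) ≤ K := by
      apply Real.rpow_le_rpow _ hsum (by positivity)
      have := Real.rpow_nonneg ha0 s
      have := Real.rpow_nonneg hb0 s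
      linarith
    exact absurd hKr (not_lt.mpr this)
  -- build the corresponding element of the u-set
  have hmem : ((a ^ u + b ^ u) / 2) ^ (1 / u) ∈ {r : ℝ | ∃ x y : X, ‖x‖ = 1 ∧ ‖y‖ = 1 ∧
      r = ((‖x + τ • y‖ ^ u + ‖τ • x - y‖ ^ u) / 2) ^ (1 / u)} :=
    ⟨x, y, hx, hy, rfl⟩
  have hle : ((a ^ u + b ^ u) / 2) ^ (1 / u) ≤ J := le_csSup (hbdd u hu) hmem
  have : J < ((a ^ u + b ^ u) / 2) ^ (1 / u) :=
    lt_of_lt_of_le hmin (min_le_mean_rpow ha0 hb0 hu)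
  linarith

theorem skewJames_eq_one_add_iff (X : Type*) [NormedAddCommGroup X] [NormedSpace ℝ X]
    (hdim : 2 ≤ Module.rank ℝ X) (t₁ t₂ τ : ℝ) (ht₁ : 1 ≤ t₁) (ht : t₁ ≤ t₂)
    (hτ₀ : 0 ≤ τ) (hτ₁ : τ ≤ 1) :
    skewJames X t₁ τ = 1 + τ ↔ skewJames X t₂ τ = 1 + τ := by
  constructor
  · exact skewJames_transfer X hdim t₁ t₂ τ (by linarith) (by linarith) hτ₀
  · exact skewJames_transfer X hdim t₂ t₁ τ (by linarith) (by linarith) hτ₀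
end

section
/- Let X be a real normed space of dimension ≥ 2, t ≥ 1, and 0 ≤ τ ≤ 1, and set J = J(X), the James constant. If X is uniformly non-square (i.e., J(X) < 2), then J_t[τ,X]^t ≤ max over ε ∈ [J, 2] of ([1 − τ + τε]^t + [1 + τ − 2τδ_X(ε)]^t)/2, where δ_X is the modulus of convexity. -/
open Real

noncomputable def jamesConstant (X : Type*) [NormedAddCommGroup X] [NormedSpace ℝ X] : ℝ :=
  sSup {r : ℝ | ∃ x y : X, ‖x‖ = 1 ∧ ‖y‖ = 1 ∧ r = min ‖x + y‖ ‖x - y‖}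

noncomputable def modulusOfConvexity (X : Type*) [NormedAddCommGroup X] [NormedSpace ℝ X]
    (ε : ℝ) : ℝ :=
  sInf {r : ℝ | ∃ x y : X, ‖x‖ = 1 ∧ ‖y‖ = 1 ∧ ε ≤ ‖x - y‖ ∧ r = 1 - ‖x + y‖ / 2}

section AuxSJ

variable {X : Type*} [NormedAddCommGroup X] [NormedSpace ℝ X]

/-- Basic triangle-type inequality for radial stretching. -/
lemma sj_smul_ineq (a b : X) {R : ℝ} (hR : 1 ≤ R) :
    R * ‖a + b‖ - (R - 1) * ‖b‖ ≤ ‖R • a + b‖ := by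
  have h : R • (a + b) = (R • a + b) + (R - 1) • b := by
    rw [smul_add, sub_smul, one_smul]; abel
  have h2 := norm_add_le (R • a + b) ((R - 1) • b)
  rw [← h, norm_smul, norm_smul, Real.norm_eq_abs, Real.norm_eq_abs,
    abs_of_nonneg (by linarith : (0:ℝ) ≤ R), abs_of_nonneg (by linarith : (0:ℝ) ≤ R - 1)] at h2
  linarith

lemma sj_bddAbove_james :
    BddAbove {r : ℝ | ∃ x y : X, ‖x‖ = 1 ∧ ‖y‖ = 1 ∧ r = min ‖x + y‖ ‖x - y‖} := by
  refine ⟨2, ?_⟩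
  rintro r ⟨x, y, hx, hy, rfl⟩
  refine le_trans (min_le_left _ _) ?_
  calc ‖x + y‖ ≤ ‖x‖ + ‖y‖ := norm_add_le _ _
    _ = 2 := by rw [hx, hy]; norm_num

lemma sj_james_nonneg {xo : X} (hxo : ‖xo‖ = 1) : 0 ≤ jamesConstant X := by
  have hmem : min ‖xo + xo‖ ‖xo - xo‖ ∈
      {r : ℝ | ∃ x y : X, ‖x‖ = 1 ∧ ‖y‖ = 1 ∧ r = min ‖x + y‖ ‖x - y‖} :=
    ⟨xo, xo, hxo, hxo, rfl⟩
  have h0 : (0:ℝ) ≤ min ‖xo + xo‖ ‖xo - xo‖ := le_min (norm_nonneg _) (norm_nonneg _)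
  exact le_trans h0 (le_csSup sj_bddAbove_james hmem)

lemma sj_modulus_bddBelow (ε : ℝ) :
    BddBelow {r : ℝ | ∃ x y : X, ‖x‖ = 1 ∧ ‖y‖ = 1 ∧ ε ≤ ‖x - y‖ ∧ r = 1 - ‖x + y‖ / 2} := by
  refine ⟨0, ?_⟩
  rintro r ⟨x, y, hx, hy, -, rfl⟩
  have := norm_add_le x y
  rw [hx, hy] at this
  linarith

lemma sj_modulus_le {ε : ℝ} {x y : X} (hx : ‖x‖ = 1) (hy : ‖y‖ = 1) (h : ε ≤ ‖x - y‖) :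
    modulusOfConvexity X ε ≤ 1 - ‖x + y‖ / 2 :=
  csInf_le (sj_modulus_bddBelow ε) ⟨x, y, hx, hy, h, rfl⟩

lemma sj_modulus_nonneg (ε : ℝ) : 0 ≤ modulusOfConvexity X ε := by
  apply Real.sInf_nonneg
  rintro r ⟨x, y, hx, hy, -, rfl⟩
  have := norm_add_le x y
  rw [hx, hy] at this
  linarith

/-- IVT on the unit circle: the distance from a fixed unit vector takes every value in `[0,2]`. -/
lemma sj_exists_unit_dist {u w : X} (hu : ‖u‖ = 1) (hw : ‖w‖ = 1)
    (hind : ∀ s t : ℝ, s • u + t • w = 0 → s = 0 ∧ t = 0)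
    {r : ℝ} (hr0 : 0 ≤ r) (hr2 : r ≤ 2) :
    ∃ v : X, ‖v‖ = 1 ∧ ‖u - v‖ = r := by
  have huu : ‖u - -u‖ = 2 := by
    rw [sub_neg_eq_add]
    have : u + u = (2:ℝ) • u := by rw [two_smul]
    rw [this, norm_smul, Real.norm_eq_abs, hu]
    norm_num
  -- generic leg
  have key : ∀ a b : X, ‖a‖ = 1 → ‖b‖ = 1 →
      (∀ θ : ℝ, θ ∈ Set.Icc (0:ℝ) 1 → (1 - θ) • a + θ • b ≠ 0) →
      r ∈ Set.Icc ‖u - a‖ ‖u - b‖ → ∃ v : X, ‖v‖ = 1 ∧ ‖u - v‖ = r := by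
    intro a b ha hb hne hr
    set n : ℝ → X := fun θ => (1 - θ) • a + θ • b with hn
    have hcn : Continuous n := by
      apply Continuous.add
      · exact (continuous_const.sub continuous_id).smul continuous_const
      · exact continuous_id.smul continuous_const
    set f : ℝ → ℝ := fun θ => ‖u - ‖n θ‖⁻¹ • n θ‖ with hf
    have hcf : ContinuousOn f (Set.Icc (0:ℝ) 1) := by
      apply ContinuousOn.norm
      apply ContinuousOn.sub continuousOn_const
      apply ContinuousOn.smul
      · exact ContinuousOn.inv₀ hcn.norm.continuousOn
          (fun θ hθ => norm_ne_zero_iff.mpr (hne θ hθ))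
      · exact hcn.continuousOn
    have hf0 : f 0 = ‖u - a‖ := by
      have : n 0 = a := by simp [hn]
      simp [hf, this, ha]
    have hf1 : f 1 = ‖u - b‖ := by
      have : n 1 = b := by simp [hn]
      simp [hf, this, hb]
    have := intermediate_value_Icc (by norm_num : (0:ℝ) ≤ 1) hcf
    rw [hf0, hf1] at this
    obtain ⟨θ, hθ, hfθ⟩ := this hr
    refine ⟨‖n θ‖⁻¹ • n θ, norm_smul_inv_norm (𝕜 := ℝ) (hne θ hθ), hfθ⟩
  rcases le_total r ‖u - w‖ with hcase | hcase
  · refine key u w hu hw ?_ ⟨by rwa [sub_self, norm_zero], hcase⟩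
    intro θ hθ h0
    obtain ⟨h1, h2⟩ := hind _ _ h0
    linarith
  · refine key w (-u) hw (by rwa [norm_neg]) ?_ ⟨hcase, by rwa [huu]⟩
    intro θ hθ h0
    have h0' : (-θ) • u + (1 - θ) • w = 0 := by
      rw [neg_smul, ← smul_neg, add_comm]
      exact h0
    obtain ⟨h1, h2⟩ := hind _ _ h0'
    linarith

set_option maxHeartbeats 2000000 in
/-- Key lemma: for any `c < J(X)` there is a unit pair with difference at least `J(X)`
and sum at least `c`. -/
lemma sj_key {u w : X} (hu : ‖u‖ = 1) (hw : ‖w‖ = 1)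
    (hind : ∀ s t : ℝ, s • u + t • w = 0 → s = 0 ∧ t = 0)
    (hJ2 : jamesConstant X < 2) {c : ℝ} (hc : c < jamesConstant X) :
    ∃ p q : X, ‖p‖ = 1 ∧ ‖q‖ = 1 ∧ jamesConstant X ≤ ‖p - q‖ ∧ c ≤ ‖p + q‖ := by
  set J := jamesConstant X with hJdef
  clear_value J
  have hJ0 : 0 ≤ J := by rw [hJdef]; exact sj_james_nonneg hu
  obtain ⟨v₀, hv₀, hdv₀⟩ := sj_exists_unit_dist hu hw hind hJ0 (le_of_lt hJ2) (r := J)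
  have hsum₀ : 2 - J ≤ ‖u + v₀‖ := by
    have h1 : ‖(u + v₀) + (u - v₀)‖ ≤ ‖u + v₀‖ + ‖u - v₀‖ := norm_add_le _ _
    have h2 : (u + v₀) + (u - v₀) = (2:ℝ) • u := by rw [two_smul]; abel
    rw [h2, norm_smul, Real.norm_eq_abs, hu, hdv₀] at h1
    have : |(2:ℝ)| = 2 := by norm_num
    rw [this] at h1
    linarith
  by_cases hcase : c ≤ 2 - J
  · exact ⟨u, v₀, hu, hv₀, le_of_eq hdv₀.symm, le_trans hcase hsum₀⟩
  push_neg at hcase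
  have hJ1 : 1 < J := by linarith
  set c' := max c 1 with hc'def
  have hc'J : c' < J := max_lt hc hJ1
  have hc'1 : 1 ≤ c' := le_max_right _ _
  have hcc' : c ≤ c' := le_max_left _ _
  have h2J : 0 < 2 - J := by linarith
  have h4J : 0 < 4 - J := by linarith
  set κ := (J - c') * (2 - J) / (4 - J) with hκdef
  have hκpos : 0 < κ := by
    apply div_pos (mul_pos (by linarith) h2J) h4J
  have hκval : κ * (4 - J) = (J - c') * (2 - J) := div_mul_cancel₀ _ (ne_of_gt h4J)
  have hκle : κ ≤ (J - c') / 2 := by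
    rw [le_div_iff₀ (by norm_num : (0:ℝ) < 2)]
    nlinarith only [hκval, h4J, hJ0, mul_nonneg (sub_nonneg.mpr (le_of_lt hc'J)) hJ0]
  set ε := J - κ with hεdef
  have hεc' : c' ≤ ε := by
    have : (J + c') / 2 ≤ ε := by rw [hεdef]; linarith
    linarith
  have hεJ : ε < J := by rw [hεdef]; linarith
  -- extract a witness pair
  have hne : Set.Nonempty {r : ℝ | ∃ x y : X, ‖x‖ = 1 ∧ ‖y‖ = 1 ∧ r = min ‖x + y‖ ‖x - y‖} :=
    ⟨min ‖u + u‖ ‖u - u‖, u, u, hu, hu, rfl⟩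
  have hεJ' : ε < sSup {r : ℝ | ∃ x y : X, ‖x‖ = 1 ∧ ‖y‖ = 1 ∧ r = min ‖x + y‖ ‖x - y‖} := by
    rw [hJdef] at hεJ; exact hεJ
  obtain ⟨rr, ⟨x, y, hx, hy, hrr⟩, hrε⟩ := exists_lt_of_lt_csSup hne hεJ'
  rw [hrr] at hrε
  have hs : ε < ‖x + y‖ := lt_of_lt_of_le hrε (min_le_left _ _)
  have hd : ε < ‖x - y‖ := lt_of_lt_of_le hrε (min_le_right _ _)
  clear hne hεJ' hrε hrr hJdef
  clear_value c' κ ε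
  by_cases h1 : J ≤ ‖x - y‖
  · exact ⟨x, y, hx, hy, h1, by linarith⟩
  by_cases h2 : J ≤ ‖x + y‖
  · refine ⟨x, -y, hx, by rwa [norm_neg], ?_, ?_⟩
    · rwa [sub_neg_eq_add]
    · rw [← sub_eq_add_neg]; linarith
  push_neg at h1 h2
  set d := ‖x - y‖ with hddef
  set s := ‖x + y‖ with hsdef
  have hdpos : 0 < d := by linarith
  have hs2 : s ≤ 2 := by
    have := norm_add_le x y; rw [hx, hy] at this; linarith
  have h2d : 0 < 2 - d := by linarith
  set tt := (J - d) / (2 - d) with httdef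
  have htt0 : 0 ≤ tt := div_nonneg (by linarith) (by linarith)
  have htt1 : tt ≤ 1 := by
    rw [httdef, div_le_one h2d]; linarith
  have httle : tt * (2 - J) ≤ κ := by
    have h' : tt ≤ κ / (2 - J) := by
      rw [httdef]
      have : J - ε = κ := by rw [hεdef]; ring
      calc (J - d) / (2 - d) ≤ (J - ε) / (2 - J) := by
            apply div_le_div₀ (by linarith) (by linarith) h2J (by linarith)
        _ = κ / (2 - J) := by rw [this]
    calc tt * (2 - J) ≤ (κ / (2 - J)) * (2 - J) := by
          apply mul_le_mul_of_nonneg_right h' (le_of_lt h2J)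
      _ = κ := div_mul_cancel₀ _ (ne_of_gt h2J)
  set e := d⁻¹ • (x - y) with hedef
  have hxy : x - y = d • e := by
    rw [hedef, smul_smul, mul_inv_cancel₀ (ne_of_gt hdpos), one_smul]
  have hee : ‖e‖ = 1 := by
    rw [hedef, norm_smul, Real.norm_eq_abs, abs_of_nonneg (inv_nonneg.mpr (le_of_lt hdpos)),
      ← hddef, inv_mul_cancel₀ (ne_of_gt hdpos)]
  set u₁ := (1 - tt) • x + tt • e with hu₁def
  set v₁ := (1 - tt) • y - tt • e with hv₁def
  have hdiff : u₁ - v₁ = ((1 - tt) * d + 2 * tt) • e := by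
    have step : u₁ - v₁ = (1 - tt) • (x - y) + (2 * tt) • e := by
      rw [hu₁def, hv₁def, smul_sub, two_mul, add_smul]; abel
    rw [step, hxy, smul_smul, ← add_smul]
  have hcoef : (1 - tt) * d + 2 * tt = J := by
    have h5 : tt * (2 - d) = J - d := div_mul_cancel₀ _ (ne_of_gt h2d)
    linear_combination h5
  have hdiffnorm : ‖u₁ - v₁‖ = J := by
    rw [hdiff, norm_smul, Real.norm_eq_abs, hee, mul_one, hcoef, abs_of_nonneg (by linarith)]
  have hsumeq : u₁ + v₁ = (1 - tt) • (x + y) := by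
    rw [hu₁def, hv₁def, smul_add]; abel
  have hsumnorm : ‖u₁ + v₁‖ = (1 - tt) * s := by
    rw [hsumeq, norm_smul, Real.norm_eq_abs, abs_of_nonneg (by linarith : (0:ℝ) ≤ 1 - tt), hsdef]
  have hS1 : c' ≤ (1 - tt) * s := by
    have h2tt : 2 * tt ≤ J - c' - κ := by
      have hB : (J - c' - κ) * (2 - J) = 2 * κ := by linear_combination -hκval
      have hgoal : (2 * tt) * (2 - J) ≤ (J - c' - κ) * (2 - J) := by
        rw [hB]; linarith only [httle]
      exact le_of_mul_le_mul_right hgoal h2J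
    have htts : tt * s ≤ tt * 2 := mul_le_mul_of_nonneg_left hs2 htt0
    linarith only [h2tt, htts, hs, hεdef]
  have hS11 : 1 ≤ (1 - tt) * s := le_trans hc'1 hS1
  have hu₁le : ‖u₁‖ ≤ 1 := by
    calc ‖u₁‖ ≤ ‖(1 - tt) • x‖ + ‖tt • e‖ := norm_add_le _ _
      _ = (1 - tt) * 1 + tt * 1 := by
          rw [norm_smul, norm_smul, Real.norm_eq_abs, Real.norm_eq_abs, hx, hee,
            abs_of_nonneg (by linarith : (0:ℝ) ≤ 1 - tt), abs_of_nonneg htt0]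
      _ = 1 := by ring
  have hv₁le : ‖v₁‖ ≤ 1 := by
    calc ‖v₁‖ ≤ ‖(1 - tt) • y‖ + ‖tt • e‖ := norm_sub_le _ _
      _ = (1 - tt) * 1 + tt * 1 := by
          rw [norm_smul, norm_smul, Real.norm_eq_abs, Real.norm_eq_abs, hy, hee,
            abs_of_nonneg (by linarith : (0:ℝ) ≤ 1 - tt), abs_of_nonneg htt0]
      _ = 1 := by ring
  have hu₁pos : 0 < ‖u₁‖ := by
    have := norm_sub_le u₁ v₁
    rw [hdiffnorm] at this
    linarith
  set R := ‖u₁‖⁻¹ with hRdef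
  have hR1 : 1 ≤ R := by
    calc (1:ℝ) = ‖u₁‖ * R := (mul_inv_cancel₀ (ne_of_gt hu₁pos)).symm
      _ ≤ 1 * R := mul_le_mul_of_nonneg_right hu₁le (inv_nonneg.mpr (le_of_lt hu₁pos))
      _ = R := one_mul R
  set Xx := R • u₁ with hXxdef
  have hXxnorm : ‖Xx‖ = 1 := by
    rw [hXxdef, norm_smul, Real.norm_eq_abs, hRdef,
      abs_of_nonneg (inv_nonneg.mpr (le_of_lt hu₁pos)), inv_mul_cancel₀ (ne_of_gt hu₁pos)]
  have hXd : J ≤ ‖Xx - v₁‖ := by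
    have h := sj_smul_ineq u₁ (-v₁) hR1
    rw [← sub_eq_add_neg, ← sub_eq_add_neg, norm_neg, hdiffnorm] at h
    have hprod := mul_nonneg (by linarith only [hR1] : (0:ℝ) ≤ R - 1)
      (by linarith only [hv₁le, hJ1] : (0:ℝ) ≤ J - ‖v₁‖)
    rw [hXxdef]; linarith only [h, hprod]
  have hXs : (1 - tt) * s ≤ ‖Xx + v₁‖ := by
    have h := sj_smul_ineq u₁ v₁ hR1
    rw [hsumnorm] at h
    have hprod := mul_nonneg (by linarith only [hR1] : (0:ℝ) ≤ R - 1)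
      (by linarith only [hv₁le, hS11] : (0:ℝ) ≤ (1 - tt) * s - ‖v₁‖)
    rw [hXxdef]; linarith only [h, hprod]
  have hv₁pos : 0 < ‖v₁‖ := by
    have := norm_sub_le Xx v₁
    rw [hXxnorm] at this
    linarith
  set R' := ‖v₁‖⁻¹ with hR'def
  have hR'1 : 1 ≤ R' := by
    calc (1:ℝ) = ‖v₁‖ * R' := (mul_inv_cancel₀ (ne_of_gt hv₁pos)).symm
      _ ≤ 1 * R' := mul_le_mul_of_nonneg_right hv₁le (inv_nonneg.mpr (le_of_lt hv₁pos))
      _ = R' := one_mul R'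
  set Yy := R' • v₁ with hYydef
  have hYynorm : ‖Yy‖ = 1 := by
    rw [hYydef, norm_smul, Real.norm_eq_abs, hR'def,
      abs_of_nonneg (inv_nonneg.mpr (le_of_lt hv₁pos)), inv_mul_cancel₀ (ne_of_gt hv₁pos)]
  have hD1 : 1 ≤ ‖Xx - v₁‖ := le_trans (le_of_lt hJ1) hXd
  have hE1 : 1 ≤ ‖Xx + v₁‖ := le_trans hS11 hXs
  refine ⟨Xx, Yy, hXxnorm, hYynorm, ?_, ?_⟩
  · have h := sj_smul_ineq v₁ (-Xx) hR'1
    rw [← sub_eq_add_neg, ← sub_eq_add_neg, norm_neg, norm_sub_rev v₁ Xx, hXxnorm] at h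
    have h2 : ‖R' • v₁ - Xx‖ = ‖Xx - Yy‖ := by rw [norm_sub_rev, hYydef]
    rw [h2] at h
    have hprod := mul_nonneg (by linarith only [hR'1] : (0:ℝ) ≤ R' - 1)
      (by linarith only [hD1] : (0:ℝ) ≤ ‖Xx - v₁‖ - 1)
    linarith only [h, hprod, hXd]
  · have h := sj_smul_ineq v₁ Xx hR'1
    rw [hXxnorm, add_comm (R' • v₁) Xx, add_comm v₁ Xx] at h
    have h2 : ‖Xx + R' • v₁‖ = ‖Xx + Yy‖ := by rw [hYydef]
    rw [h2] at h
    have hprod := mul_nonneg (by linarith only [hR'1] : (0:ℝ) ≤ R' - 1)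
      (by linarith only [hE1] : (0:ℝ) ≤ ‖Xx + v₁‖ - 1)
    linarith only [h, hprod, hXs, hS1, hcc']

end AuxSJ

set_option maxHeartbeats 4000000 in
theorem skewJames_le_of_uniformly_nonsquare (X : Type*) [NormedAddCommGroup X]
    [NormedSpace ℝ X] (hdim : 2 ≤ Module.rank ℝ X) (t τ : ℝ) (ht : 1 ≤ t)
    (hτ₀ : 0 ≤ τ) (hτ₁ : τ ≤ 1) (hJ : jamesConstant X < 2) :
    skewJames X t τ ^ t ≤
      sSup {v : ℝ | ∃ ε : ℝ, jamesConstant X ≤ ε ∧ ε ≤ 2 ∧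
        v = ((1 - τ + τ * ε) ^ t + (1 + τ - 2 * τ * modulusOfConvexity X ε) ^ t) / 2} := by
  classical
  -- independent unit vectors
  have hrank1 : (1 : Cardinal) < Module.rank ℝ X := by
    refine lt_of_lt_of_le ?_ hdim
    exact_mod_cast (by norm_num : (1:ℕ) < 2)
  have hnt : ∃ x : X, x ≠ 0 := by
    rw [← rank_pos_iff_exists_ne_zero (R := ℝ)]
    exact lt_trans (by norm_num) hrank1
  obtain ⟨x₀, hx₀⟩ := hnt
  obtain ⟨y₀, hy₀⟩ := exists_linearIndependent_pair_of_one_lt_rank hrank1 hx₀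
  have hy₀ne : y₀ ≠ 0 := by
    intro h
    have := LinearIndependent.pair_iff.mp hy₀ 0 1 (by simp [h])
    simp at this
  set u := ‖x₀‖⁻¹ • x₀ with hudef
  set w := ‖y₀‖⁻¹ • y₀ with hwdef
  have hu : ‖u‖ = 1 := by rw [hudef]; exact norm_smul_inv_norm (𝕜 := ℝ) hx₀
  have hw : ‖w‖ = 1 := by rw [hwdef]; exact norm_smul_inv_norm (𝕜 := ℝ) hy₀ne
  have hind : ∀ s t : ℝ, s • u + t • w = 0 → s = 0 ∧ t = 0 := by
    intro a b hab
    rw [hudef, hwdef, smul_smul, smul_smul] at hab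
    obtain ⟨h1, h2⟩ := LinearIndependent.pair_iff.mp hy₀ _ _ hab
    constructor
    · have := mul_eq_zero.mp h1
      rcases this with h | h
      · exact h
      · exact absurd (inv_eq_zero.mp h) (norm_ne_zero_iff.mpr hx₀)
    · have := mul_eq_zero.mp h2
      rcases this with h | h
      · exact h
      · exact absurd (inv_eq_zero.mp h) (norm_ne_zero_iff.mpr hy₀ne)
  set J := jamesConstant X with hJdef
  set δ := modulusOfConvexity X with hδdef
  clear_value J
  clear_value δ
  have hJ0 : 0 ≤ J := by rw [hJdef]; exact sj_james_nonneg hu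
  have hJ2 : J ≤ 2 := le_of_lt hJ
  have ht0 : (0:ℝ) < t := lt_of_lt_of_le one_pos ht
  have htne : t ≠ 0 := ne_of_gt ht0
  have ht0' : (0:ℝ) ≤ t := le_of_lt ht0
  have hit0 : (0:ℝ) ≤ 1 / t := by positivity
  have hδ1 : ∀ ε : ℝ, ε ≤ 2 → δ ε ≤ 1 := by
    intro ε hε
    have h2 : ‖u - -u‖ = 2 := by
      rw [sub_neg_eq_add]
      have : u + u = (2:ℝ) • u := by rw [two_smul]
      rw [this, norm_smul, Real.norm_eq_abs, hu]; norm_num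
    have h3 := sj_modulus_le (x := u) (y := -u) (ε := ε) hu (by rw [norm_neg]; exact hu)
      (le_of_le_of_eq hε h2.symm)
    rw [add_neg_cancel, norm_zero] at h3
    rw [hδdef]; linarith
  set S := {v : ℝ | ∃ ε : ℝ, J ≤ ε ∧ ε ≤ 2 ∧
      v = ((1 - τ + τ * ε) ^ t + (1 + τ - 2 * τ * δ ε) ^ t) / 2} with hSdef
  clear_value S
  -- bounds on bases
  have hbase1 : ∀ ε : ℝ, J ≤ ε → ε ≤ 2 → 0 ≤ 1 - τ + τ * ε ∧ 1 - τ + τ * ε ≤ 2 := by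
    intro ε h1 h2
    have hε0 : 0 ≤ ε := le_trans hJ0 h1
    have ha := mul_nonneg hτ₀ hε0
    have hb := mul_le_mul_of_nonneg_left h2 hτ₀
    constructor <;> linarith only [ha, hb, hτ₀, hτ₁]
  have hbase2 : ∀ ε : ℝ, ε ≤ 2 → 0 ≤ 1 + τ - 2 * τ * δ ε ∧ 1 + τ - 2 * τ * δ ε ≤ 2 := by
    intro ε h2
    have hd0 := sj_modulus_nonneg (X := X) ε
    have hd1 := hδ1 ε h2
    rw [← hδdef] at hd0
    have hm1 := mul_le_mul_of_nonneg_left hd1 hτ₀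
    have hm0 := mul_nonneg hτ₀ hd0
    constructor <;> linarith only [hm1, hm0, hτ₀, hτ₁]
  have hSbdd : BddAbove S := by
    rw [hSdef]
    refine ⟨2 ^ t, ?_⟩
    rintro v ⟨ε, h1, h2, rfl⟩
    obtain ⟨ha0, ha2⟩ := hbase1 ε h1 h2
    obtain ⟨hb0, hb2⟩ := hbase2 ε h2
    have hA := Real.rpow_le_rpow ha0 ha2 ht0'
    have hB := Real.rpow_le_rpow hb0 hb2 ht0'
    linarith
  have hSmem2 : ((1 - τ + τ * 2) ^ t + (1 + τ - 2 * τ * δ 2) ^ t) / 2 ∈ S := by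
    rw [hSdef]; exact ⟨2, hJ2, le_refl 2, rfl⟩
  have hSsup0 : 0 ≤ sSup S := by
    refine le_trans ?_ (le_csSup hSbdd hSmem2)
    obtain ⟨ha0, -⟩ := hbase1 2 hJ2 (le_refl 2)
    obtain ⟨hb0, -⟩ := hbase2 2 (le_refl 2)
    have := Real.rpow_nonneg ha0 t
    have := Real.rpow_nonneg hb0 t
    linarith
  -- the skew James set
  set T := {r : ℝ | ∃ x y : X, ‖x‖ = 1 ∧ ‖y‖ = 1 ∧
      r = ((‖x + τ • y‖ ^ t + ‖τ • x - y‖ ^ t) / 2) ^ (1 / t)} with hTdef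
  clear_value T
  have hTne : T.Nonempty := by
    rw [hTdef]; exact ⟨_, u, u, hu, hu, rfl⟩
  -- key bound: every element of T is at most (sSup S) ^ (1/t)
  have hkey : ∀ r ∈ T, r ≤ sSup S ^ (1 / t) := by
    intro r hr
    rw [hTdef] at hr
    obtain ⟨x, y, hx, hy, rfl⟩ := hr
    set a := ‖x + τ • y‖ with hadef
    set b := ‖τ • x - y‖ with hbdef
    set s := ‖x + y‖ with hsdef
    set d := ‖x - y‖ with hddef
    have hs2 : s ≤ 2 := by
      have := norm_add_le x y; rw [hx, hy] at this; linarith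
    have hd2 : d ≤ 2 := by
      have := norm_sub_le x y; rw [hx, hy] at this; linarith
    have ha : a ≤ 1 - τ + τ * s := by
      have hrw : x + τ • y = (1 - τ) • x + τ • (x + y) := by
        rw [smul_add, sub_smul, one_smul]; abel
      calc a = ‖(1 - τ) • x + τ • (x + y)‖ := by rw [hadef, hrw]
        _ ≤ ‖(1 - τ) • x‖ + ‖τ • (x + y)‖ := norm_add_le _ _
        _ = (1 - τ) * 1 + τ * s := by
            rw [norm_smul, norm_smul, Real.norm_eq_abs, Real.norm_eq_abs, hx,
              abs_of_nonneg (by linarith : (0:ℝ) ≤ 1 - τ), abs_of_nonneg hτ₀, hsdef]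
        _ = 1 - τ + τ * s := by ring
    have hb : b ≤ 1 - τ + τ * d := by
      have hrw : τ • x - y = τ • (x - y) - (1 - τ) • y := by
        rw [smul_sub, sub_smul, one_smul]; abel
      calc b = ‖τ • (x - y) - (1 - τ) • y‖ := by rw [hbdef, hrw]
        _ ≤ ‖τ • (x - y)‖ + ‖(1 - τ) • y‖ := norm_sub_le _ _
        _ = τ * d + (1 - τ) * 1 := by
            rw [norm_smul, norm_smul, Real.norm_eq_abs, Real.norm_eq_abs, hy,
              abs_of_nonneg (by linarith : (0:ℝ) ≤ 1 - τ), abs_of_nonneg hτ₀, hddef]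
        _ = 1 - τ + τ * d := by ring
    have ha0 : (0:ℝ) ≤ a := norm_nonneg _
    have hb0 : (0:ℝ) ≤ b := norm_nonneg _
    -- find a suitable ε
    have hmain : ∃ ε : ℝ, J ≤ ε ∧ ε ≤ 2 ∧
        a ^ t + b ^ t ≤ (1 - τ + τ * ε) ^ t + (1 + τ - 2 * τ * δ ε) ^ t := by
      rcases le_or_gt J d with hJd | hJd
      · -- ε = d
        refine ⟨d, hJd, hd2, ?_⟩
        have hδd : δ d ≤ 1 - s / 2 := by
          have h := sj_modulus_le (x := x) (y := y) hx hy (le_of_eq hddef)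
          rw [← hsdef, ← hδdef] at h
          exact h
        have hA : b ^ t ≤ (1 - τ + τ * d) ^ t :=
          Real.rpow_le_rpow hb0 hb ht0'
        have hB : a ^ t ≤ (1 + τ - 2 * τ * δ d) ^ t := by
          apply Real.rpow_le_rpow ha0 _ ht0'
          have hm := mul_le_mul_of_nonneg_left hδd (by linarith only [hτ₀] : (0:ℝ) ≤ 2 * τ)
          linarith only [hm, ha]
        linarith
      rcases le_or_gt J s with hJs | hJs
      · -- ε = s
        refine ⟨s, hJs, hs2, ?_⟩
        have hδs : δ s ≤ 1 - d / 2 := by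
          have h := sj_modulus_le (x := x) (y := -y) (ε := s) hx (by rw [norm_neg]; exact hy)
            (by rw [sub_neg_eq_add]; try exact le_of_eq hsdef)
          rw [← sub_eq_add_neg, ← hddef, ← hδdef] at h
          exact h
        have hA : a ^ t ≤ (1 - τ + τ * s) ^ t :=
          Real.rpow_le_rpow ha0 ha ht0'
        have hB : b ^ t ≤ (1 + τ - 2 * τ * δ s) ^ t := by
          apply Real.rpow_le_rpow hb0 _ ht0'
          have hm := mul_le_mul_of_nonneg_left hδs (by linarith only [hτ₀] : (0:ℝ) ≤ 2 * τ)
          linarith only [hm, hb]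
        linarith
      · -- ε = J
        refine ⟨J, le_refl J, hJ2, ?_⟩
        obtain ⟨p, q, hp, hq, hpq1, hpq2⟩ := sj_key hu hw hind
          (by rw [← hJdef]; exact hJ) (show d < jamesConstant X by rw [← hJdef]; exact hJd)
        rw [← hJdef] at hpq1
        have hδJ : δ J ≤ 1 - d / 2 := by
          have h := sj_modulus_le (x := p) (y := q) hp hq hpq1
          rw [← hδdef] at h
          linarith
        have hA : a ^ t ≤ (1 - τ + τ * J) ^ t := by
          apply Real.rpow_le_rpow ha0 _ ht0'
          have hm := mul_le_mul_of_nonneg_left (le_of_lt hJs) hτ₀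
          linarith only [hm, ha]
        have hB : b ^ t ≤ (1 + τ - 2 * τ * δ J) ^ t := by
          apply Real.rpow_le_rpow hb0 _ ht0'
          have hm := mul_le_mul_of_nonneg_left hδJ (by linarith only [hτ₀] : (0:ℝ) ≤ 2 * τ)
          linarith only [hm, hb]
        linarith
    obtain ⟨ε, hε1, hε2, hbound⟩ := hmain
    have hmemS : ((1 - τ + τ * ε) ^ t + (1 + τ - 2 * τ * δ ε) ^ t) / 2 ∈ S := by
      rw [hSdef]; exact ⟨ε, hε1, hε2, rfl⟩
    have hQ0 : 0 ≤ (a ^ t + b ^ t) / 2 := by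
      have := Real.rpow_nonneg ha0 t
      have := Real.rpow_nonneg hb0 t
      linarith
    have hQle : (a ^ t + b ^ t) / 2 ≤ sSup S := by
      refine le_trans ?_ (le_csSup hSbdd hmemS)
      linarith
    exact Real.rpow_le_rpow hQ0 hQle hit0
  -- conclude
  have hsup_le : sSup T ≤ sSup S ^ (1 / t) := csSup_le hTne hkey
  have hT0 : 0 ≤ sSup T := by
    obtain ⟨r, hr⟩ := hTne
    rw [hTdef] at hr
    have hr0 : 0 ≤ r := by
      obtain ⟨x, y, hx, hy, rfl⟩ := hr
      apply Real.rpow_nonneg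
      have := Real.rpow_nonneg (norm_nonneg (x + τ • y)) t
      have := Real.rpow_nonneg (norm_nonneg (τ • x - y)) t
      linarith
    have hTbdd : BddAbove T := by
      rw [hTdef]
      refine ⟨((2 ^ t + 2 ^ t) / 2) ^ (1 / t), ?_⟩
      rintro r' ⟨x, y, hx, hy, rfl⟩
      apply Real.rpow_le_rpow _ _ hit0
      · have := Real.rpow_nonneg (norm_nonneg (x + τ • y)) t
        have := Real.rpow_nonneg (norm_nonneg (τ • x - y)) t
        linarith
      · have h1 : ‖x + τ • y‖ ≤ 2 := by
          calc ‖x + τ • y‖ ≤ ‖x‖ + ‖τ • y‖ := norm_add_le _ _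
            _ = 1 + τ * 1 := by
                rw [hx, norm_smul, Real.norm_eq_abs, hy, abs_of_nonneg hτ₀]
            _ ≤ 2 := by linarith
        have h2 : ‖τ • x - y‖ ≤ 2 := by
          calc ‖τ • x - y‖ ≤ ‖τ • x‖ + ‖y‖ := norm_sub_le _ _
            _ = τ * 1 + 1 := by
                rw [hy, norm_smul, Real.norm_eq_abs, hx, abs_of_nonneg hτ₀]
            _ ≤ 2 := by linarith
        have hA := Real.rpow_le_rpow (norm_nonneg (x + τ • y)) h1 ht0'
        have hB := Real.rpow_le_rpow (norm_nonneg (τ • x - y)) h2 ht0'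
        linarith
    refine le_trans hr0 (le_csSup hTbdd ?_)
    rw [hTdef]
    exact hr
  have hskew : skewJames X t τ = sSup T := by rw [hTdef]; rfl
  rw [hskew]
  calc sSup T ^ t ≤ (sSup S ^ (1 / t)) ^ t :=
        Real.rpow_le_rpow hT0 hsup_le ht0'
    _ = sSup S ^ ((1 / t) * t) := (Real.rpow_mul hSsup0 _ _).symm
    _ = sSup S ^ (1:ℝ) := by rw [one_div_mul_cancel htne]
    _ = sSup S := Real.rpow_one _
end

section
/- Let X be a real normed space of dimension ≥ 2 with James constant J = J(X), and suppose 1 < J. Define G_{−∞}(X) = sup{ min(‖x+τy‖², ‖τx−y‖²)/(1+τ²) : ‖x‖=‖y‖=1, τ ∈ [0,1] }. Then G_{−∞}(X) ≤ (J−1)² + 4(J−1)²·a / ((J² − 2J + a)² + 4(J−1)²), where a = √((2J − J²)² + 4(J−1)²). -/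
open Real

noncomputable def GNegInf (X : Type*) [NormedAddCommGroup X] [NormedSpace ℝ X] : ℝ :=
  sSup {r : ℝ | ∃ (x y : X) (τ : ℝ), ‖x‖ = 1 ∧ ‖y‖ = 1 ∧ 0 ≤ τ ∧ τ ≤ 1 ∧
    r = min (‖x + τ • y‖ ^ 2) (‖τ • x - y‖ ^ 2) / (1 + τ ^ 2)}

theorem GNegInf_le (X : Type*) [NormedAddCommGroup X] [NormedSpace ℝ X]
    (hdim : 2 ≤ Module.rank ℝ X) (hJ : 1 < jamesConstant X) :
    GNegInf X ≤ (jamesConstant X - 1) ^ 2 +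
      4 * (jamesConstant X - 1) ^ 2 *
        Real.sqrt ((2 * jamesConstant X - jamesConstant X ^ 2) ^ 2 +
          4 * (jamesConstant X - 1) ^ 2) /
      ((jamesConstant X ^ 2 - 2 * jamesConstant X +
          Real.sqrt ((2 * jamesConstant X - jamesConstant X ^ 2) ^ 2 +
            4 * (jamesConstant X - 1) ^ 2)) ^ 2 +
        4 * (jamesConstant X - 1) ^ 2) := by
  set J := jamesConstant X with hJdef
  have hJ1 : (0:ℝ) < (J - 1) ^ 2 := by
    have : 0 < J - 1 := by linarith
    positivity
  -- simplify the square root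
  have hsqrt : Real.sqrt ((2 * J - J ^ 2) ^ 2 + 4 * (J - 1) ^ 2) = J ^ 2 - 2 * J + 2 := by
    rw [show (2 * J - J ^ 2) ^ 2 + 4 * (J - 1) ^ 2 = (J ^ 2 - 2 * J + 2) ^ 2 by ring]
    exact Real.sqrt_sq (by nlinarith)
  rw [hsqrt]
  have hD : ((J ^ 2 - 2 * J + (J ^ 2 - 2 * J + 2)) ^ 2 + 4 * (J - 1) ^ 2) ≠ 0 := by
    nlinarith
  have hRHS : (J - 1) ^ 2 +
      4 * (J - 1) ^ 2 * (J ^ 2 - 2 * J + 2) /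
        ((J ^ 2 - 2 * J + (J ^ 2 - 2 * J + 2)) ^ 2 + 4 * (J - 1) ^ 2)
      = (J - 1) ^ 2 + 1 := by
    field_simp
    ring
  rw [hRHS]
  -- J is an upper bound for the James set
  have hbdd : BddAbove {r : ℝ | ∃ x y : X, ‖x‖ = 1 ∧ ‖y‖ = 1 ∧ r = min ‖x + y‖ ‖x - y‖} := by
    refine ⟨2, ?_⟩
    rintro r ⟨x, y, hx, hy, rfl⟩
    calc min ‖x + y‖ ‖x - y‖ ≤ ‖x + y‖ := min_le_left _ _
      _ ≤ ‖x‖ + ‖y‖ := norm_add_le _ _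
      _ = 2 := by rw [hx, hy]; norm_num
  apply Real.sSup_le
  · rintro r ⟨x, y, τ, hx, hy, hτ0, hτ1, rfl⟩
    have hJub : min ‖x + y‖ ‖x - y‖ ≤ J := le_csSup hbdd ⟨x, y, hx, hy, rfl⟩
    have h1 : ‖x + τ • y‖ ≤ τ * ‖x + y‖ + (1 - τ) := by
      have he : x + τ • y = τ • (x + y) + (1 - τ) • x := by module
      rw [he]
      calc ‖τ • (x + y) + (1 - τ) • x‖ ≤ ‖τ • (x + y)‖ + ‖(1 - τ) • x‖ := norm_add_le _ _
        _ = τ * ‖x + y‖ + (1 - τ) := by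
            rw [norm_smul, norm_smul, hx, Real.norm_of_nonneg hτ0,
              Real.norm_of_nonneg (by linarith)]
            ring
    have h2 : ‖τ • x - y‖ ≤ τ * ‖x - y‖ + (1 - τ) := by
      have he : τ • x - y = τ • (x - y) + (1 - τ) • (-y) := by module
      rw [he]
      calc ‖τ • (x - y) + (1 - τ) • (-y)‖ ≤ ‖τ • (x - y)‖ + ‖(1 - τ) • (-y)‖ := norm_add_le _ _
        _ = τ * ‖x - y‖ + (1 - τ) := by
            rw [norm_smul, norm_smul, norm_neg, hy, Real.norm_of_nonneg hτ0,
              Real.norm_of_nonneg (by linarith)]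
            ring
    have hc0 : 0 ≤ τ * J + (1 - τ) := by nlinarith
    have hmin2 : min (‖x + τ • y‖ ^ 2) (‖τ • x - y‖ ^ 2) ≤ (τ * J + (1 - τ)) ^ 2 := by
      rcases le_total ‖x + y‖ ‖x - y‖ with h | h
      · have hA : ‖x + τ • y‖ ≤ τ * J + (1 - τ) := by
          have : min ‖x + y‖ ‖x - y‖ = ‖x + y‖ := min_eq_left h
          nlinarith [norm_nonneg (x + y)]
        calc min (‖x + τ • y‖ ^ 2) (‖τ • x - y‖ ^ 2) ≤ ‖x + τ • y‖ ^ 2 := min_le_left _ _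
          _ ≤ (τ * J + (1 - τ)) ^ 2 := by nlinarith [norm_nonneg (x + τ • y)]
      · have hB : ‖τ • x - y‖ ≤ τ * J + (1 - τ) := by
          have : min ‖x + y‖ ‖x - y‖ = ‖x - y‖ := min_eq_right h
          nlinarith [norm_nonneg (x - y)]
        calc min (‖x + τ • y‖ ^ 2) (‖τ • x - y‖ ^ 2) ≤ ‖τ • x - y‖ ^ 2 := min_le_right _ _
          _ ≤ (τ * J + (1 - τ)) ^ 2 := by nlinarith [norm_nonneg (τ • x - y)]
    have hτsq : (0:ℝ) < 1 + τ ^ 2 := by positivity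
    rw [div_le_iff₀ hτsq]
    calc min (‖x + τ • y‖ ^ 2) (‖τ • x - y‖ ^ 2) ≤ (τ * J + (1 - τ)) ^ 2 := hmin2
      _ ≤ ((J - 1) ^ 2 + 1) * (1 + τ ^ 2) := by nlinarith [sq_nonneg (τ - (J - 1))]
  · positivity
end

section
/- Let J > 1 be a real number and define G(τ) = (τ²J² + 2τ(1−τ)J + (1−τ)²)/(1+τ²) for τ ∈ [0,1]. Then the maximum of G on [0,1] equals (J−1)² + 4(J−1)²·a / ((J² − 2J + a)² + 4(J−1)²), where a = √((2J−J²)² + 4(J−1)²), attained at τ = (a + J² − 2J)/(2(J−1)) when this value lies in [0,1]. -/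
open Real Set

theorem max_of_G (J a τ₀ : ℝ) (hJ₁ : 1 < J) (hJ₂ : J ≤ 2)
    (ha : a = Real.sqrt ((2 * J - J ^ 2) ^ 2 + 4 * (J - 1) ^ 2))
    (hτ₀ : τ₀ = (a + J ^ 2 - 2 * J) / (2 * (J - 1)))
    (hmem : τ₀ ∈ Icc (0 : ℝ) 1) :
    IsMaxOn (fun τ : ℝ => (τ ^ 2 * J ^ 2 + 2 * τ * (1 - τ) * J + (1 - τ) ^ 2) / (1 + τ ^ 2))
      (Icc (0 : ℝ) 1) τ₀ ∧
    (τ₀ ^ 2 * J ^ 2 + 2 * τ₀ * (1 - τ₀) * J + (1 - τ₀) ^ 2) / (1 + τ₀ ^ 2) =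
      (J - 1) ^ 2 + 4 * (J - 1) ^ 2 * a / ((J ^ 2 - 2 * J + a) ^ 2 + 4 * (J - 1) ^ 2) := by
  have hb : (0:ℝ) < J - 1 := by linarith
  have ha' : a = J ^ 2 - 2 * J + 2 := by
    rw [ha]
    have h1 : (2 * J - J ^ 2) ^ 2 + 4 * (J - 1) ^ 2 = (J ^ 2 - 2 * J + 2) ^ 2 := by ring
    rw [h1, Real.sqrt_sq (by nlinarith)]
  have hτ : τ₀ = J - 1 := by
    rw [hτ₀, ha']
    field_simp
    ring
  constructor
  · intro x hx
    simp only [mem_setOf_eq]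
    rw [hτ]
    have hx2 : (0:ℝ) < 1 + x ^ 2 := by positivity
    have hJ2 : (0:ℝ) < 1 + (J - 1) ^ 2 := by positivity
    rw [div_le_div_iff₀ hx2 hJ2]
    nlinarith [sq_nonneg (x - (J - 1)), sq_nonneg (x * (J - 1) - 1), sq_nonneg (J - 1)]
  · rw [hτ, ha']
    have h1 : (0:ℝ) < 1 + (J - 1) ^ 2 := by positivity
    have h2 : (J ^ 2 - 2 * J + (J ^ 2 - 2 * J + 2)) ^ 2 + 4 * (J - 1) ^ 2 ≠ 0 := by positivity
    field_simp
    ring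
end

section
/- Let X be a real normed space of dimension ≥ 2, and for unit vectors x, y and τ ∈ [0,1], min(‖x+τy‖², ‖τx−y‖²) ≤ τ²J² + 2τ(1−τ)J + (1−τ)², where J = J(X) is the James constant. -/
theorem min_sq_le_james_bound (X : Type*) [NormedAddCommGroup X] [NormedSpace ℝ X]
    (hdim : 2 ≤ Module.rank ℝ X) (x y : X) (hx : ‖x‖ = 1) (hy : ‖y‖ = 1)
    (τ : ℝ) (hτ₀ : 0 ≤ τ) (hτ₁ : τ ≤ 1) :
    min (‖x + τ • y‖ ^ 2) (‖τ • x - y‖ ^ 2) ≤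
      τ ^ 2 * jamesConstant X ^ 2 + 2 * τ * (1 - τ) * jamesConstant X + (1 - τ) ^ 2 := by
  set S : Set ℝ := {r : ℝ | ∃ x y : X, ‖x‖ = 1 ∧ ‖y‖ = 1 ∧ r = min ‖x + y‖ ‖x - y‖} with hS
  have hBdd : BddAbove S := by
    refine ⟨2, ?_⟩
    rintro r ⟨a, b, ha, hb, rfl⟩
    calc min ‖a + b‖ ‖a - b‖ ≤ ‖a + b‖ := min_le_left _ _
      _ ≤ ‖a‖ + ‖b‖ := norm_add_le _ _
      _ = 2 := by rw [ha, hb]; norm_num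
  have hJdef : jamesConstant X = sSup S := rfl
  have hJ0 : (0 : ℝ) ≤ jamesConstant X := by
    have h0 : (0 : ℝ) ∈ S := by
      refine ⟨x, x, hx, hx, ?_⟩
      rw [sub_self, norm_zero, min_eq_right (norm_nonneg _)]
    rw [hJdef]; exact le_csSup hBdd h0
  have hmem : min ‖x + y‖ ‖x - y‖ ≤ jamesConstant X := by
    rw [hJdef]; exact le_csSup hBdd ⟨x, y, hx, hy, rfl⟩
  set J := jamesConstant X
  have h1 : ‖x + τ • y‖ ≤ τ * ‖x + y‖ + (1 - τ) := by
    have hd : x + τ • y = τ • (x + y) + (1 - τ) • x := by module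
    calc ‖x + τ • y‖ ≤ ‖τ • (x + y)‖ + ‖(1 - τ) • x‖ := by rw [hd]; exact norm_add_le _ _
      _ = τ * ‖x + y‖ + (1 - τ) := by
          rw [norm_smul, norm_smul, hx, Real.norm_eq_abs, Real.norm_eq_abs,
            abs_of_nonneg hτ₀, abs_of_nonneg (by linarith)]
          ring
  have h2 : ‖τ • x - y‖ ≤ τ * ‖x - y‖ + (1 - τ) := by
    have hd : τ • x - y = τ • (x - y) + (1 - τ) • (-y) := by module
    calc ‖τ • x - y‖ ≤ ‖τ • (x - y)‖ + ‖(1 - τ) • (-y)‖ := by rw [hd]; exact norm_add_le _ _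
      _ = τ * ‖x - y‖ + (1 - τ) := by
          rw [norm_smul, norm_smul, norm_neg, hy, Real.norm_eq_abs, Real.norm_eq_abs,
            abs_of_nonneg hτ₀, abs_of_nonneg (by linarith)]
          ring
  have hmin : min ‖x + τ • y‖ ‖τ • x - y‖ ≤ τ * J + (1 - τ) := by
    rcases le_total ‖x + y‖ ‖x - y‖ with h | h
    · have := min_eq_left h ▸ hmem
      calc min ‖x + τ • y‖ ‖τ • x - y‖ ≤ ‖x + τ • y‖ := min_le_left _ _
        _ ≤ τ * ‖x + y‖ + (1 - τ) := h1
        _ ≤ τ * J + (1 - τ) := by nlinarith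
    · have := min_eq_right h ▸ hmem
      calc min ‖x + τ • y‖ ‖τ • x - y‖ ≤ ‖τ • x - y‖ := min_le_right _ _
        _ ≤ τ * ‖x - y‖ + (1 - τ) := h2
        _ ≤ τ * J + (1 - τ) := by nlinarith
  have hmn : (0 : ℝ) ≤ min ‖x + τ • y‖ ‖τ • x - y‖ := le_min (norm_nonneg _) (norm_nonneg _)
  have hsq : (min ‖x + τ • y‖ ‖τ • x - y‖) ^ 2 ≤ (τ * J + (1 - τ)) ^ 2 :=
    pow_le_pow_left₀ hmn hmin 2
  have hmin2 : min (‖x + τ • y‖ ^ 2) (‖τ • x - y‖ ^ 2) ≤ (min ‖x + τ • y‖ ‖τ • x - y‖) ^ 2 := by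
    rcases le_total ‖x + τ • y‖ ‖τ • x - y‖ with h | h
    · rw [min_eq_left h]; exact min_le_left _ _
    · rw [min_eq_right h]; exact min_le_right _ _
  calc min (‖x + τ • y‖ ^ 2) (‖τ • x - y‖ ^ 2) ≤ (τ * J + (1 - τ)) ^ 2 := hmin2.trans hsq
    _ = τ ^ 2 * J ^ 2 + 2 * τ * (1 - τ) * J + (1 - τ) ^ 2 := by ring
end
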